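/- arXiv:2111.08847 — 7 statements merged into one kernel-verified Lean document; each statement's English description precedes it below -/
import Mathlib

section
/- Let p, q, r > 2 be pairwise coprime integers, let a_m denote the coefficient of x^m in Q_{p,q,r}(x), and put S(m) = Σ_{m−p < n ≤ m} χ(n) (sum over integers n). Then for every m with 0 ≤ m ≤ (p−1)(q−1)(r−1), a_m = S(m) − S(m−q) − S(m−r) + S(m−q−r). -/
open Polynomial

/-- The ternary inclusion-exclusion polynomial `Q_{p,q,r}`. -/
noncomputable def Qpoly (p q r : ℕ) : Polynomial ℤ :=
  ((X ^ (p * q * r) - 1) * (X ^ p - 1) * (X ^ q - 1) * (X ^ r - 1)) /ₘ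
    ((X ^ (p * q) - 1) * (X ^ (q * r) - 1) * (X ^ (r * p) - 1) * (X - 1))

/-- The set `A_{p,q,r}` of coefficients of `Q_{p,q,r}` (whose degree is `(p-1)(q-1)(r-1)`). -/
noncomputable def coeffSet (p q r : ℕ) : Set ℤ :=
  {n : ℤ | ∃ m : ℕ, m ≤ (p - 1) * (q - 1) * (r - 1) ∧ (Qpoly p q r).coeff m = n}

open Finset in
lemma IE.count_finset_val (s : Finset ℕ) (d : ℕ) : s.val.count d = if d ∈ s then 1 else 0 := by
  split
  · exact Multiset.count_eq_one_of_mem s.nodup (by assumption)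
  · exact Multiset.count_eq_zero_of_notMem (by assumption)

open Finset in
lemma IE.D_dvd_N (p q r : ℕ) (hp : 0 < p) (hq : 0 < q) (hr : 0 < r)
    (cpq : Nat.Coprime p q) (cpr : Nat.Coprime p r) (cqr : Nat.Coprime q r) :
    ((X ^ (p * q) - 1) * (X ^ (q * r) - 1) * (X ^ (r * p) - 1) * (X - 1) : Polynomial ℤ) ∣
      ((X ^ (p * q * r) - 1) * (X ^ p - 1) * (X ^ q - 1) * (X ^ r - 1)) := by
  have key : ∀ n : ℕ, 0 < n → (X ^ n - 1 : Polynomial ℤ) =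
      (Multiset.map (fun d => cyclotomic d ℤ) (Nat.divisors n).val).prod := by
    intro n hn
    rw [← prod_cyclotomic_eq_X_pow_sub_one hn ℤ]
    rfl
  have hX1 : (X - 1 : Polynomial ℤ) =
      (Multiset.map (fun d => cyclotomic d ℤ) (Nat.divisors 1).val).prod := by
    have := key 1 one_pos; simpa using this
  rw [key (p*q) (by positivity), key (q*r) (by positivity), key (r*p) (by positivity),
      key (p*q*r) (by positivity), key p hp, key q hq, key r hr, hX1,
      ← Multiset.prod_add, ← Multiset.prod_add, ← Multiset.prod_add,
      ← Multiset.prod_add, ← Multiset.prod_add, ← Multiset.prod_add,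
      ← Multiset.map_add, ← Multiset.map_add, ← Multiset.map_add,
      ← Multiset.map_add, ← Multiset.map_add, ← Multiset.map_add]
  apply Multiset.prod_dvd_prod_of_le
  apply Multiset.map_le_map
  rw [Multiset.le_iff_count]
  intro d
  simp only [Multiset.count_add, IE.count_finset_val]
  simp only [Nat.mem_divisors, Nat.dvd_one, ne_eq, hp.ne', hq.ne', hr.ne',
    mul_eq_zero, or_self, not_false_eq_true, and_true, false_or, or_false, not_or,
    one_ne_zero]
  have i1 : d ∣ p*q → d ∣ q*r → d ∣ q := by
    intro h1 h2
    have : d ∣ Nat.gcd (p*q) (r*q) := Nat.dvd_gcd h1 (by rwa [mul_comm r q])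
    rwa [Nat.gcd_mul_right, cpr, one_mul] at this
  have i2 : d ∣ p*q → d ∣ r*p → d ∣ p := by
    intro h1 h2
    have : d ∣ Nat.gcd (q*p) (r*p) := Nat.dvd_gcd (by rwa [mul_comm q p]) h2
    rwa [Nat.gcd_mul_right, cqr, one_mul] at this
  have i3 : d ∣ q*r → d ∣ r*p → d ∣ r := by
    intro h1 h2
    rw [mul_comm] at h2
    have : d ∣ Nat.gcd (q*r) (p*r) := Nat.dvd_gcd h1 h2
    rwa [Nat.gcd_mul_right, Nat.Coprime.gcd_eq_one cpq.symm, one_mul] at this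
  have jpqr1 : d ∣ p*q → d ∣ p*q*r := fun h => h.trans (dvd_mul_right _ _)
  have jpqr2 : d ∣ q*r → d ∣ p*q*r := fun h => h.trans ⟨p, by ring⟩
  have jpqr3 : d ∣ r*p → d ∣ p*q*r := fun h => h.trans ⟨q, by ring⟩
  by_cases h1 : d ∣ p*q <;> by_cases h2 : d ∣ q*r <;> by_cases h3 : d ∣ r*p
  · have hd1 : d = 1 :=
      Nat.eq_one_of_dvd_one ((Nat.dvd_gcd (i2 h1 h3) (i1 h1 h2)).trans cpq.dvd)
    simp [hd1]
  · have hne : d ≠ 1 := fun hd => h3 (hd ▸ one_dvd _)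
    simp only [h1, h2, h3, jpqr1 h1, i1 h1 h2, hne, if_true, if_false]
    split_ifs <;> omega
  · have hne : d ≠ 1 := fun hd => h2 (hd ▸ one_dvd _)
    simp only [h1, h2, h3, jpqr1 h1, i2 h1 h3, hne, if_true, if_false]
    split_ifs <;> omega
  · have hne : d ≠ 1 := fun hd => h2 (hd ▸ one_dvd _)
    simp only [h1, h2, h3, jpqr1 h1, hne, if_true, if_false]
    split_ifs <;> omega
  · have hne : d ≠ 1 := fun hd => h1 (hd ▸ one_dvd _)
    simp only [h1, h2, h3, jpqr2 h2, i3 h2 h3, hne, if_true, if_false]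
    split_ifs <;> omega
  · have hne : d ≠ 1 := fun hd => h1 (hd ▸ one_dvd _)
    simp only [h1, h2, h3, jpqr2 h2, hne, if_true, if_false]
    split_ifs <;> omega
  · have hne : d ≠ 1 := fun hd => h1 (hd ▸ one_dvd _)
    simp only [h1, h2, h3, jpqr3 h3, hne, if_true, if_false]
    split_ifs <;> omega
  · have hne : d ≠ 1 := fun hd => h1 (hd ▸ one_dvd _)
    simp only [h1, h2, h3, hne, if_true, if_false]
    split_ifs <;> omega

lemma IE.rep_unique (p q r : ℕ)
    (cpq : Nat.Coprime p q) (cpr : Nat.Coprime p r) (cqr : Nat.Coprime q r)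
    (n xv yv zv δv a b c : ℤ)
    (hx : 0 ≤ xv) (hx' : xv < p) (hy : 0 ≤ yv) (hy' : yv < q) (hz : 0 ≤ zv) (hz' : zv < r)
    (heq : n = xv * ((q:ℤ) * r) + yv * ((p:ℤ) * r) + zv * ((p:ℤ) * q) + δv * ((p:ℤ) * q * r))
    (ha : 0 ≤ a) (ha' : a < p) (hb : 0 ≤ b) (hb' : b < q) (hc : 0 ≤ c) (hc' : c < r)
    (heq2 : n = a * ((q:ℤ) * r) + b * ((p:ℤ) * r) + c * ((p:ℤ) * q)) :
    xv = a ∧ yv = b ∧ zv = c ∧ δv = 0 := by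
  have hp0 : (0:ℤ) < p := lt_of_le_of_lt hx hx'
  have hq0 : (0:ℤ) < q := lt_of_le_of_lt hy hy'
  have hr0 : (0:ℤ) < r := lt_of_le_of_lt hz hz'
  have h0 : (xv - a) * ((q:ℤ)*r) + (yv - b) * ((p:ℤ)*r) + (zv - c) * ((p:ℤ)*q)
      + δv * ((p:ℤ)*q*r) = 0 := by linear_combination heq2 - heq
  have cp : IsCoprime (p:ℤ) ((q:ℤ)*r) :=
    (Nat.isCoprime_iff_coprime.mpr cpq).mul_right (Nat.isCoprime_iff_coprime.mpr cpr)
  have cq : IsCoprime (q:ℤ) ((p:ℤ)*r) :=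
    (Nat.isCoprime_iff_coprime.mpr cpq.symm).mul_right (Nat.isCoprime_iff_coprime.mpr cqr)
  have cr : IsCoprime (r:ℤ) ((p:ℤ)*q) :=
    (Nat.isCoprime_iff_coprime.mpr cpr.symm).mul_right (Nat.isCoprime_iff_coprime.mpr cqr.symm)
  have dx : (p:ℤ) ∣ (xv - a) :=
    cp.dvd_of_dvd_mul_right ⟨-((yv - b)*r + (zv - c)*q + δv*(q*r)), by linear_combination h0⟩
  have hxa : xv - a = 0 := Int.eq_zero_of_abs_lt_dvd dx (abs_lt.mpr ⟨by linarith, by linarith⟩)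
  have dy : (q:ℤ) ∣ (yv - b) :=
    cq.dvd_of_dvd_mul_right ⟨-((zv - c)*p + δv*(p*r)), by linear_combination h0 - (q:ℤ)*r*hxa⟩
  have hyb : yv - b = 0 := Int.eq_zero_of_abs_lt_dvd dy (abs_lt.mpr ⟨by linarith, by linarith⟩)
  have dz : (r:ℤ) ∣ (zv - c) :=
    cr.dvd_of_dvd_mul_right ⟨-(δv*(p*q)), by linear_combination h0 - (q:ℤ)*r*hxa - (p:ℤ)*r*hyb⟩
  have hzc : zv - c = 0 := Int.eq_zero_of_abs_lt_dvd dz (abs_lt.mpr ⟨by linarith, by linarith⟩)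
  have hδ : δv * ((p:ℤ)*q*r) = 0 := by
    linear_combination h0 - (q:ℤ)*r*hxa - (p:ℤ)*r*hyb - (p:ℤ)*q*hzc
  have : δv = 0 := by
    rcases mul_eq_zero.mp hδ with h | h
    · exact h
    · exact absurd h (by positivity)
  exact ⟨by linarith, by linarith, by linarith, this⟩

open Finset in
lemma IE.geom_aux (a b : ℕ) :
    (∑ i ∈ range a, (X : Polynomial ℤ) ^ (b * i)) * (X ^ b - 1) = X ^ (b * a) - 1 := by
  have := geom_sum_mul ((X : Polynomial ℤ)^b) a
  simpa [← pow_mul] using this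

open Finset

theorem stmt_6 (p q r : ℕ) (hp : 2 < p) (hq : 2 < q) (hr : 2 < r)
    (cpq : Nat.Coprime p q) (cpr : Nat.Coprime p r) (cqr : Nat.Coprime q r)
    (x y z δ : ℤ → ℤ)
    (hrep : ∀ n : ℤ,
      n = x n * ((q : ℤ) * r) + y n * ((p : ℤ) * r) + z n * ((p : ℤ) * q) +
        δ n * ((p : ℤ) * q * r) ∧
      0 ≤ x n ∧ x n < (p : ℤ) ∧ 0 ≤ y n ∧ y n < (q : ℤ) ∧ 0 ≤ z n ∧ z n < (r : ℤ))
    (χ : ℤ → ℤ) (hχ : ∀ n : ℤ, χ n = if δ n = 0 then 1 else 0)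
    (S : ℤ → ℤ) (hS : ∀ m : ℤ, S m = ∑ n ∈ Finset.Ioc (m - (p : ℤ)) m, χ n) :
    ∀ m : ℕ, m ≤ (p - 1) * (q - 1) * (r - 1) →
      (Qpoly p q r).coeff m =
        S m - S ((m : ℤ) - q) - S ((m : ℤ) - r) + S ((m : ℤ) - q - r) := by
  have hp0 : 0 < p := by omega
  have hq0 : 0 < q := by omega
  have hr0 : 0 < r := by omega
  -- ## basic facts about χ and S
  have chi_neg : ∀ n : ℤ, n < 0 → χ n = 0 := by
    intro n hn
    rw [hχ, if_neg]
    intro h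
    obtain ⟨e, hx, hx', hy, hy', hz, hz'⟩ := hrep n
    rw [h, zero_mul, add_zero] at e
    have h1 : 0 ≤ x n * ((q:ℤ)*r) := mul_nonneg hx (by positivity)
    have h2 : 0 ≤ y n * ((p:ℤ)*r) := mul_nonneg hy (by positivity)
    have h3 : 0 ≤ z n * ((p:ℤ)*q) := mul_nonneg hz (by positivity)
    linarith
  have S_eq : ∀ m : ℤ, S m = ∑ i ∈ range p, χ (m - i) := by
    intro m
    rw [hS]
    refine Finset.sum_nbij' (fun n => (m - n).toNat) (fun i => m - i) ?_ ?_ ?_ ?_ ?_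
    · intro n hn
      rw [Finset.mem_Ioc] at hn
      rw [Finset.mem_range]
      omega
    · intro i hi
      rw [Finset.mem_range] at hi
      rw [Finset.mem_Ioc]
      omega
    · intro n hn
      rw [Finset.mem_Ioc] at hn
      omega
    · intro i hi
      rw [Finset.mem_range] at hi
      omega
    · intro n hn
      rw [Finset.mem_Ioc] at hn
      congr 1
      omega
  have S_negz : ∀ m : ℤ, m < 0 → S m = 0 := by
    intro m hm
    rw [S_eq]
    apply Finset.sum_eq_zero
    intro i _
    apply chi_neg
    have : (0:ℤ) ≤ i := Int.natCast_nonneg i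
    linarith
  -- ## the polynomial G whose coefficients are χ
  set A : Polynomial ℤ := ∑ i ∈ range p, X ^ ((q*r) * i) with hAdef
  set B : Polynomial ℤ := ∑ i ∈ range q, X ^ ((p*r) * i) with hBdef
  set C : Polynomial ℤ := ∑ i ∈ range r, X ^ ((p*q) * i) with hCdef
  set G : Polynomial ℤ :=
    ∑ t ∈ range p ×ˢ (range q ×ˢ range r), X ^ ((q*r) * t.1 + (p*r) * t.2.1 + (p*q) * t.2.2)
      with hGdef
  have hBC : B * C = ∑ t ∈ range q ×ˢ range r, X ^ ((p*r) * t.1 + (p*q) * t.2) := by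
    rw [hBdef, hCdef, Finset.sum_mul_sum, Finset.sum_product]
    exact Finset.sum_congr rfl fun b _ => Finset.sum_congr rfl fun c _ => (pow_add X _ _).symm
  have hG : G = A * (B * C) := by
    rw [hBC, hAdef, hGdef, Finset.sum_mul_sum, Finset.sum_product]
    refine Finset.sum_congr rfl fun a _ => Finset.sum_congr rfl fun t _ => ?_
    rw [← pow_add, add_assoc]
  have chi_coeff : ∀ n : ℕ, G.coeff n = χ n := by
    intro n
    rw [hGdef, finset_sum_coeff]
    simp only [coeff_X_pow]
    rw [Finset.sum_boole]
    obtain ⟨hrepn, hx, hx', hy, hy', hz, hz'⟩ := hrep n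
    by_cases hδ : δ (n:ℤ) = 0
    · rw [hχ, if_pos hδ]
      have hfil : ((range p ×ˢ (range q ×ˢ range r)).filter
            (fun t => (n:ℕ) = (q*r) * t.1 + (p*r) * t.2.1 + (p*q) * t.2.2))
          = {((x n).toNat, ((y n).toNat, (z n).toNat))} := by
        ext ⟨a, b, c⟩
        simp only [Finset.mem_filter, Finset.mem_product, Finset.mem_range,
          Finset.mem_singleton, Prod.mk.injEq]
        constructor
        · rintro ⟨⟨ha, hb, hc⟩, heqn⟩
          have heq2 : (n:ℤ) = (a:ℤ) * ((q:ℤ)*r) + (b:ℤ) * ((p:ℤ)*r) + (c:ℤ) * ((p:ℤ)*q) := by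
            rw [heqn]; push_cast; ring
          obtain ⟨e1, e2, e3, _⟩ := IE.rep_unique p q r cpq cpr cqr (n:ℤ)
            (x n) (y n) (z n) (δ n) a b c hx hx' hy hy' hz hz' hrepn
            (by positivity) (by exact_mod_cast ha) (by positivity) (by exact_mod_cast hb)
            (by positivity) (by exact_mod_cast hc) heq2
          refine ⟨by omega, by omega, by omega⟩
        · rintro ⟨e1, e2, e3⟩
          subst e1; subst e2; subst e3
          have hxx : ((x (n:ℤ)).toNat : ℤ) = x n := Int.toNat_of_nonneg hx
          have hyy : ((y (n:ℤ)).toNat : ℤ) = y n := Int.toNat_of_nonneg hy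
          have hzz : ((z (n:ℤ)).toNat : ℤ) = z n := Int.toNat_of_nonneg hz
          refine ⟨⟨by omega, by omega, by omega⟩, ?_⟩
          have hkey : (n:ℤ) = ((q*r) * (x n).toNat + (p*r) * (y n).toNat
              + (p*q) * (z n).toNat : ℕ) := by
            push_cast
            rw [hxx, hyy, hzz]
            linear_combination hrepn + ((p:ℤ)*q*r) * hδ
          exact_mod_cast hkey
      rw [hfil, Finset.card_singleton, Nat.cast_one]
    · rw [hχ, if_neg hδ]
      have hfil : ((range p ×ˢ (range q ×ˢ range r)).filter
            (fun t => (n:ℕ) = (q*r) * t.1 + (p*r) * t.2.1 + (p*q) * t.2.2)) = ∅ := by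
        rw [Finset.eq_empty_iff_forall_notMem]
        rintro ⟨a, b, c⟩ hmem
        simp only [Finset.mem_filter, Finset.mem_product, Finset.mem_range] at hmem
        obtain ⟨⟨ha, hb, hc⟩, heqn⟩ := hmem
        have heq2 : (n:ℤ) = (a:ℤ) * ((q:ℤ)*r) + (b:ℤ) * ((p:ℤ)*r) + (c:ℤ) * ((p:ℤ)*q) := by
          rw [heqn]; push_cast; ring
        obtain ⟨_, _, _, e4⟩ := IE.rep_unique p q r cpq cpr cqr (n:ℤ)
          (x n) (y n) (z n) (δ n) a b c hx hx' hy hy' hz hz' hrepn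
          (by positivity) (by exact_mod_cast ha) (by positivity) (by exact_mod_cast hb)
          (by positivity) (by exact_mod_cast hc) heq2
        exact hδ e4
      rw [hfil, Finset.card_empty, Nat.cast_zero]
  -- ## the polynomial H whose coefficients are S
  set P : Polynomial ℤ := ∑ i ∈ range p, X ^ i with hPdef
  set H : Polynomial ℤ := G * P with hHdef
  have hH : ∀ m : ℕ, H.coeff m = S m := by
    intro m
    have hexp : H = ∑ i ∈ range p, G * X ^ i := by
      rw [hHdef, hPdef, Finset.mul_sum]
    rw [hexp, finset_sum_coeff, S_eq]
    refine Finset.sum_congr rfl fun i _ => ?_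
    rw [coeff_mul_X_pow']
    by_cases h : i ≤ m
    · rw [if_pos h, chi_coeff (m - i)]
      congr 1
      omega
    · rw [if_neg h]
      exact (chi_neg ((m:ℤ) - i) (by omega)).symm
  -- ## the polynomial T whose coefficients are the RHS
  set T : Polynomial ℤ := H * ((X ^ q - 1) * (X ^ r - 1)) with hTdef
  have hT : ∀ m : ℕ, T.coeff m
      = S m - S ((m:ℤ) - q) - S ((m:ℤ) - r) + S ((m:ℤ) - q - r) := by
    intro m
    have haux : ∀ k : ℕ, (H * X ^ k).coeff m = S ((m:ℤ) - k) := by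
      intro k
      rw [coeff_mul_X_pow']
      by_cases h : k ≤ m
      · rw [if_pos h, hH]
        congr 1
        omega
      · rw [if_neg h]
        exact (S_negz ((m:ℤ) - k) (by omega)).symm
    have hexp : T = H * X ^ (q + r) - H * X ^ q - H * X ^ r + H := by
      rw [hTdef]; ring
    rw [hexp, coeff_add, coeff_sub, coeff_sub, haux (q + r), haux q, haux r, hH m]
    have hc : ((m:ℤ) - ((q:ℕ) + (r:ℕ) : ℕ)) = (m:ℤ) - q - r := by push_cast; ring
    rw [hc]
    ring
  -- ## the key polynomial identity
  set W : Polynomial ℤ := X ^ (p*q*r) - 1 with hWdef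
  set Dpol : Polynomial ℤ := (X^(p*q) - 1) * (X^(q*r) - 1) * (X^(r*p) - 1) * (X - 1)
    with hDdef
  set Npol : Polynomial ℤ := (X^(p*q*r) - 1) * (X^p - 1) * (X^q - 1) * (X^r - 1) with hNdef
  have hA : A * (X ^ (q*r) - 1) = W := by
    rw [hAdef, IE.geom_aux, hWdef]
    congr 2
    ring
  have hB : B * (X ^ (p*r) - 1) = W := by
    rw [hBdef, IE.geom_aux, hWdef]
    congr 2
    ring
  have hC : C * (X ^ (p*q) - 1) = W := by
    rw [hCdef, IE.geom_aux, hWdef]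
  have hP : P * (X - 1) = X ^ p - 1 := by
    rw [hPdef]
    simpa using geom_sum_mul (X : Polynomial ℤ) p
  have hrp2 : (X ^ (r*p) : Polynomial ℤ) = X ^ (p*r) := by rw [mul_comm]
  have main : T * Dpol = Npol * W ^ 2 := by
    have e1 : T * Dpol
        = (A * (X ^ (q*r) - 1)) * ((B * (X ^ (p*r) - 1)) * ((C * (X ^ (p*q) - 1))
          * ((P * (X - 1)) * ((X ^ q - 1) * (X ^ r - 1))))) := by
      rw [hTdef, hHdef, hG, hDdef, hrp2]
      ring
    rw [e1, hA, hB, hC, hP, hNdef, hWdef]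
    ring
  -- ## conclude
  have hDmonic : Dpol.Monic := by
    rw [hDdef]
    have m1 : (X ^ (p*q) - 1 : Polynomial ℤ).Monic := by
      simpa using monic_X_pow_sub_C (1:ℤ) (n := p*q) (by positivity)
    have m2 : (X ^ (q*r) - 1 : Polynomial ℤ).Monic := by
      simpa using monic_X_pow_sub_C (1:ℤ) (n := q*r) (by positivity)
    have m3 : (X ^ (r*p) - 1 : Polynomial ℤ).Monic := by
      simpa using monic_X_pow_sub_C (1:ℤ) (n := r*p) (by positivity)
    have m4 : (X - 1 : Polynomial ℤ).Monic := by
      simpa using monic_X_sub_C (1:ℤ)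
    exact ((m1.mul m2).mul m3).mul m4
  have hdvd : Dpol ∣ Npol := by
    rw [hDdef, hNdef]
    exact IE.D_dvd_N p q r hp0 hq0 hr0 cpq cpr cqr
  have hmod : Npol %ₘ Dpol = 0 := (modByMonic_eq_zero_iff_dvd hDmonic).mpr hdvd
  have hfact : Dpol * (Npol /ₘ Dpol) = Npol := by
    have := modByMonic_add_div Npol Dpol
    rwa [hmod, zero_add] at this
  have hcancel : T = (Npol /ₘ Dpol) * W ^ 2 := by
    have hD0 : Dpol ≠ 0 := hDmonic.ne_zero
    apply mul_right_cancel₀ hD0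
    rw [main]
    conv_lhs => rw [← hfact]
    ring
  have hQeq : Qpoly p q r = Npol /ₘ Dpol := by
    rw [hNdef, hDdef]
    rfl
  intro m hm
  have hmlt : m < p * q * r := by
    have h1 : (p-1) * (q-1) * (r-1) ≤ p * q * (r-1) :=
      Nat.mul_le_mul (Nat.mul_le_mul (Nat.sub_le p 1) (Nat.sub_le q 1)) le_rfl
    have h2 : p * q * (r-1) < p * q * r :=
      Nat.mul_lt_mul_of_pos_left (by omega) (by positivity)
    omega
  have hTQ : T = ((Npol /ₘ Dpol) * X ^ (p*q*r)) * X ^ (p*q*r)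
      - (Npol /ₘ Dpol) * X ^ (p*q*r) - (Npol /ₘ Dpol) * X ^ (p*q*r) + (Npol /ₘ Dpol) := by
    rw [hcancel, hWdef]
    ring
  have hcoeff : T.coeff m = (Npol /ₘ Dpol).coeff m := by
    rw [hTQ]
    simp only [coeff_add, coeff_sub, coeff_mul_X_pow',
      if_neg (show ¬ p * q * r ≤ m by omega)]
    ring
  rw [hQeq, ← hcoeff, hT m]
end

section
/- Let p, q, r > 2 be pairwise coprime integers and let n be an integer with n ≤ (p−1)(q−1)(r−1). Then χ(n) = 1 if and only if f(n) ≤ ⌊n/r⌋, where f(n) = x_n·q + y_n·p. -/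
/-!
Dividing the representation `n = x·qr + y·pr + z·pq + δ·pqr` by `r` gives
`⌊n/r⌋ = f(n) + δ·pq + ⌊z·pq/r⌋`, and `0 ≤ ⌊z·pq/r⌋ < pq` because `0 ≤ z < r`.
Hence `f(n) ≤ ⌊n/r⌋` exactly when `δ ≥ 0`. On the other hand `x, y, z ≥ 0` give `δ·pqr ≤ n`,
and `n ≤ (p-1)(q-1)(r-1) < pqr` forces `δ ≤ 0`; so `f(n) ≤ ⌊n/r⌋` exactly when `δ = 0`.
-/

lemma Int.nonneg_iff_nonneg_mul_add {δ m w : ℤ} (hw : 0 ≤ w) (hwm : w < m) :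
    0 ≤ δ ↔ 0 ≤ δ * m + w := by
  constructor
  · intro hδ
    nlinarith
  · intro h
    by_contra! hδ
    nlinarith

lemma Int.sub_one_mul_sub_one_mul_sub_one_lt {p q r : ℤ} (hp : 0 < p) (hq : 0 < q)
    (hr : 0 < r) : (p - 1) * (q - 1) * (r - 1) < p * q * r := by
  nlinarith [mul_pos hp hq, mul_pos hq hr, mul_pos hp hr]

section Representation

variable {p q r x y z δ n : ℤ}

lemma ediv_eq_of_eq_add_mul (hr : r ≠ 0)
    (hrep : n = x * (q * r) + y * (p * r) + z * (p * q) + δ * (p * q * r)) :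
    n / r = z * (p * q) / r + (x * q + y * p + δ * (p * q)) := by
  rw [← Int.add_mul_ediv_left _ _ hr, hrep]
  ring_nf

lemma nonpos_of_eq_add_mul_of_lt (hx : 0 ≤ x) (hy : 0 ≤ y) (hz : 0 ≤ z)
    (hp : 0 < p) (hq : 0 < q) (hr : 0 < r)
    (hrep : n = x * (q * r) + y * (p * r) + z * (p * q) + δ * (p * q * r))
    (hn : n < p * q * r) : δ ≤ 0 := by
  have hpqr : 0 < p * q * r := by positivity
  have : δ * (p * q * r) < 1 * (p * q * r) := by
    have := mul_nonneg hx (mul_pos hq hr).le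
    have := mul_nonneg hy (mul_pos hp hr).le
    have := mul_nonneg hz (mul_pos hp hq).le
    linarith
  have := lt_of_mul_lt_mul_right this hpqr.le
  omega

lemma eq_zero_iff_le_ediv_of_eq_add_mul (hx : 0 ≤ x) (hy : 0 ≤ y) (hz : 0 ≤ z)
    (hzr : z < r) (hp : 0 < p) (hq : 0 < q)
    (hrep : n = x * (q * r) + y * (p * r) + z * (p * q) + δ * (p * q * r))
    (hn : n < p * q * r) : δ = 0 ↔ x * q + y * p ≤ n / r := by
  have hr : 0 < r := by omega
  have hδ := nonpos_of_eq_add_mul_of_lt hx hy hz hp hq hr hrep hn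
  have hw : 0 ≤ z * (p * q) / r := Int.ediv_nonneg (by positivity) hr.le
  have hwpq : z * (p * q) / r < p * q := Int.ediv_lt_of_lt_mul hr (by nlinarith [mul_pos hp hq])
  rw [ediv_eq_of_eq_add_mul hr.ne' hrep, le_antisymm_iff, and_iff_right hδ,
    Int.nonneg_iff_nonneg_mul_add hw hwpq]
  constructor <;> intro h <;> linarith

end Representation

theorem stmt_7_general (p q r : ℕ)
    (x y z δ : ℤ → ℤ)
    (hrep : ∀ n : ℤ,
      n = x n * ((q : ℤ) * r) + y n * ((p : ℤ) * r) + z n * ((p : ℤ) * q) +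
        δ n * ((p : ℤ) * q * r) ∧
      0 ≤ x n ∧ x n < (p : ℤ) ∧ 0 ≤ y n ∧ y n < (q : ℤ) ∧ 0 ≤ z n ∧ z n < (r : ℤ))
    (χ : ℤ → ℤ) (hχ : ∀ n : ℤ, χ n = if δ n = 0 then 1 else 0)
    (f : ℤ → ℤ) (hf : ∀ n : ℤ, f n = x n * (q : ℤ) + y n * (p : ℤ))
    (n : ℤ) (hn : n ≤ ((p : ℤ) - 1) * ((q : ℤ) - 1) * ((r : ℤ) - 1)) :
    χ n = 1 ↔ f n ≤ ⌊(n : ℚ) / (r : ℚ)⌋ := by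
  obtain ⟨hrepn, hx, hxp, hy, hyq, hz, hzr⟩ := hrep n
  have hp : 0 < (p : ℤ) := by omega
  have hq : 0 < (q : ℤ) := by omega
  have hr : 0 < (r : ℤ) := by omega
  have hn' : n < p * q * r :=
    hn.trans_lt (Int.sub_one_mul_sub_one_mul_sub_one_lt hp hq hr)
  rw [hχ, hf, Rat.floor_intCast_div_natCast,
    ← eq_zero_iff_le_ediv_of_eq_add_mul hx hy hz hzr hp hq hrepn hn']
  split_ifs with h <;> simp [h]

theorem stmt_7 (p q r : ℕ) (hp : 2 < p) (hq : 2 < q) (hr : 2 < r)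
    (cpq : Nat.Coprime p q) (cpr : Nat.Coprime p r) (cqr : Nat.Coprime q r)
    (x y z δ : ℤ → ℤ)
    (hrep : ∀ n : ℤ,
      n = x n * ((q : ℤ) * r) + y n * ((p : ℤ) * r) + z n * ((p : ℤ) * q) +
        δ n * ((p : ℤ) * q * r) ∧
      0 ≤ x n ∧ x n < (p : ℤ) ∧ 0 ≤ y n ∧ y n < (q : ℤ) ∧ 0 ≤ z n ∧ z n < (r : ℤ))
    (χ : ℤ → ℤ) (hχ : ∀ n : ℤ, χ n = if δ n = 0 then 1 else 0)
    (f : ℤ → ℤ) (hf : ∀ n : ℤ, f n = x n * (q : ℤ) + y n * (p : ℤ))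
    (n : ℤ) (hn : n ≤ ((p : ℤ) - 1) * ((q : ℤ) - 1) * ((r : ℤ) - 1)) :
    χ n = 1 ↔ f n ≤ ⌊(n : ℚ) / (r : ℚ)⌋ :=
  stmt_7_general p q r x y z δ hrep χ hχ f hf n hn
end

section
/- Let p, q, r be distinct primes and fix ε with 0 < ε < 1/4. Then for all sufficiently large exponents a, putting P = p^a, there exist nonnegative integers i and j such that q^i·r^j ≡ 1 (mod P) and min(⟨q^i⟩_P, P − ⟨q^i⟩_P, ⟨r^j⟩_P, P − ⟨r^j⟩_P) > (1/4 − ε)·P. -/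
section helpers

lemma vd_lemma (p : ℕ) (hp : p.Prime) (m : ℤ) (t : ℕ) (ht2 : 2 ≤ t)
    (hm : ¬ (p:ℤ) ∣ m)
    (h1 : (p:ℤ)^t ∣ m - 1) (h2 : ¬ (p:ℤ)^(t+1) ∣ m - 1) (d : ℕ) :
    emultiplicity (p:ℤ) (m^d - 1) = (t : ℕ∞) + emultiplicity p d := by
  have hmt : emultiplicity (p:ℤ) (m - 1) = (t : ℕ∞) := emultiplicity_eq_coe.mpr ⟨h1, h2⟩
  rcases eq_or_ne p 2 with hp2 | hp2
  · subst hp2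
    have h4 : (4:ℤ) ∣ m - 1 := by
      have : (2:ℤ)^2 ∣ m - 1 := dvd_trans (pow_dvd_pow _ ht2) h1
      simpa using this
    have := Int.two_pow_sub_pow' (x := m) (y := 1) d h4 (by simpa using hm)
    simp only [one_pow] at this
    have e2 : ((2:ℕ):ℤ) = (2:ℤ) := rfl
    rw [e2] at hmt
    rw [e2, this, hmt, ← Int.natCast_emultiplicity, e2]
  · have hodd : Odd p := hp.odd_of_ne_two hp2
    have hxy : (p:ℤ) ∣ m - 1 := dvd_trans (dvd_pow_self _ (by omega)) h1
    have := Int.emultiplicity_pow_sub_pow hp hodd (x := m) (y := 1) hxy hm d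
    simpa [hmt] using this

lemma cover_lemma (p : ℕ) (hp : p.Prime) (m : ℤ) (t a : ℕ) (ht2 : 2 ≤ t) (hta : t ≤ a)
    (hm : ¬ (p:ℤ) ∣ m)
    (h1 : (p:ℤ)^t ∣ m - 1) (h2 : ¬ (p:ℤ)^(t+1) ∣ m - 1) :
    ∀ x : ℤ, (p:ℤ)^t ∣ x - 1 → ∃ s : ℕ, m^s % (p:ℤ)^a = x % (p:ℤ)^a := by
  have hp2 : 2 ≤ p := hp.two_le
  have hpz : (2:ℤ) ≤ (p:ℤ) := by exact_mod_cast hp2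
  set P : ℤ := (p:ℤ)^a with hPdef
  set N : ℕ := p^(a-t) with hNdef
  have hN0 : 0 < N := pow_pos (by omega) _
  have hPt : P = (p:ℤ)^t * (N:ℤ) := by
    rw [hPdef, hNdef]; push_cast; rw [← pow_add]; congr 1; omega
  have hpt1 : (1:ℤ) < (p:ℤ)^t := one_lt_pow₀ (by linarith) (by omega)
  have hP0 : 0 < P := by rw [hPdef]; positivity
  have dec : ∀ w : ℤ, (p:ℤ)^t ∣ w - 1 → ∃ e : ℕ, e < N ∧ w % P = 1 + (e:ℤ) * (p:ℤ)^t := by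
    intro w hw
    have hw0 : 0 ≤ w % P := Int.emod_nonneg w hP0.ne'
    have hwP : w % P < P := Int.emod_lt_of_pos w hP0
    have hdvd : (p:ℤ)^t ∣ w % P - 1 := by
      have h4 : w - w % P = P * (w / P) := by rw [Int.emod_def]; ring
      have h5 : (p:ℤ)^t ∣ (w - 1) - (w - w % P) := by
        refine dvd_sub hw ?_
        rw [h4, hPt]
        exact Dvd.dvd.mul_right (dvd_mul_right _ _) _
      have h6 : (w - 1) - (w - w % P) = w % P - 1 := by ring
      rwa [h6] at h5
    have hw1 : 1 ≤ w % P := by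
      rcases (lt_or_ge (w % P) 1) with h | h
      · exfalso
        have h0 : w % P = 0 := by omega
        rw [h0] at hdvd
        have : (p:ℤ)^t ∣ 1 := (dvd_neg (α := ℤ)).mp (by simpa using hdvd)
        have := Int.le_of_dvd one_pos this
        linarith
      · exact h
    obtain ⟨e', he'⟩ := hdvd
    have hpt0 : (0:ℤ) < (p:ℤ)^t := by linarith
    have he'0 : 0 ≤ e' := by nlinarith
    have he'N : e' < (N:ℤ) := by
      have : (p:ℤ)^t * e' < (p:ℤ)^t * N := by rw [← hPt]; omega
      exact lt_of_mul_lt_mul_left this (le_of_lt hpt0)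
    refine ⟨e'.toNat, by omega, ?_⟩
    rw [Int.toNat_of_nonneg he'0]
    linarith [he']
  have hdvd_ms : ∀ s : ℕ, (p:ℤ)^t ∣ m^s - 1 := by
    intro s
    refine dvd_trans h1 ?_
    simpa using sub_dvd_pow_sub_pow m 1 s
  set f : ℕ → ℕ := fun s => ((m^s % P - 1) / (p:ℤ)^t).toNat with hfdef
  have hf : ∀ s : ℕ, f s < N ∧ m^s % P = 1 + (f s : ℤ) * (p:ℤ)^t := by
    intro s
    obtain ⟨e, heN, hee⟩ := dec (m^s) (hdvd_ms s)
    have hfe : f s = e := by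
      rw [hfdef]
      simp only
      rw [hee]
      have h7 : (1 + (e:ℤ)*(p:ℤ)^t - 1) = (p:ℤ)^t * e := by ring
      rw [h7, Int.mul_ediv_cancel_left _ (by linarith), Int.toNat_natCast]
    rw [hfe]; exact ⟨heN, hee⟩
  have haux : ∀ s1 s2 : ℕ, s1 ≤ s2 → s2 - s1 < N → P ∣ m^s2 - m^s1 → s1 = s2 := by
    intro s1 s2 hle hlt hdv
    set d := s2 - s1 with hd
    rcases Nat.eq_zero_or_pos d with hd0 | hd0
    · omega
    have hsplit : m^s2 - m^s1 = m^s1 * (m^d - 1) := by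
      rw [mul_sub, ← pow_add, mul_one]
      congr 2
      omega
    have hcopp : IsCoprime ((p:ℤ)) m :=
      ((Nat.prime_iff_prime_int.mp hp).coprime_iff_not_dvd).mpr hm
    have hcop : IsCoprime P (m^s1) := (hcopp.pow : IsCoprime ((p:ℤ)^a) (m^s1))
    have hdvd1 : P ∣ m^d - 1 := hcop.dvd_of_dvd_mul_left (by rwa [hsplit] at hdv)
    have hle' : (a:ℕ∞) ≤ emultiplicity ((p:ℕ):ℤ) (m^d - 1) := le_emultiplicity_of_pow_dvd hdvd1
    rw [vd_lemma p hp m t ht2 hm h1 h2 d] at hle'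
    have hle'' : ((a-t : ℕ) : ℕ∞) ≤ emultiplicity p d := by
      rw [ENat.coe_sub]
      exact tsub_le_iff_left.mpr hle'
    have hNd : p^(a-t) ∣ d := pow_dvd_of_le_emultiplicity hle''
    have : N ≤ d := Nat.le_of_dvd hd0 hNd
    omega
  intro x hx
  obtain ⟨e, heN, hee⟩ := dec x hx
  have hinj : Set.InjOn f (Finset.range N) := by
    intro s1 hs1 s2 hs2 hfeq
    simp only [Finset.coe_range, Set.mem_Iio] at hs1 hs2
    have h12 : m^s1 % P = m^s2 % P := by rw [(hf s1).2, (hf s2).2, hfeq]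
    have h12' : P ∣ m^s2 - m^s1 := Int.ModEq.dvd h12
    rcases le_total s1 s2 with h | h
    · exact haux s1 s2 h (by omega) h12'
    · exact (haux s2 s1 h (by omega) (Int.ModEq.dvd h12.symm)).symm
  have himg : Finset.image f (Finset.range N) = Finset.range N := by
    apply Finset.eq_of_subset_of_card_le
    · intro y hy
      simp only [Finset.mem_image, Finset.mem_range] at hy ⊢
      obtain ⟨s, _, rfl⟩ := hy
      exact (hf s).1
    · rw [Finset.card_image_of_injOn hinj]
  have hmem : e ∈ Finset.image f (Finset.range N) := by
    rw [himg]; exact Finset.mem_range.mpr heN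
  obtain ⟨s, _, hfs⟩ := Finset.mem_image.mp hmem
  exact ⟨s, by rw [(hf s).2, hfs, hee]⟩

lemma setup_lemma (p q : ℕ) (hp : p.Prime) (hq : q.Prime) (hpq : p ≠ q) :
    ∃ (K t : ℕ), 0 < K ∧ 3 ≤ t ∧ (p:ℤ)^t ∣ (q:ℤ)^K - 1 ∧ ¬ (p:ℤ)^(t+1) ∣ (q:ℤ)^K - 1 := by
  set K : ℕ := (p^3).totient with hK
  have hK0 : 0 < K := Nat.totient_pos.mpr (pow_pos hp.pos 3)
  have hco : Nat.Coprime q (p^3) :=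
    ((Nat.coprime_primes hq hp).mpr (Ne.symm hpq)).pow_right 3
  have heuler : q ^ K ≡ 1 [MOD p^3] := Nat.ModEq.pow_totient hco
  have hq2 : 2 ≤ q := hq.two_le
  have hqK : 2 ≤ q ^ K := by
    calc 2 = 2^1 := (pow_one 2).symm
    _ ≤ 2^K := Nat.pow_le_pow_right (by norm_num) hK0
    _ ≤ q^K := Nat.pow_le_pow_left hq2 K
  have hdvd3 : (p:ℤ)^3 ∣ (q:ℤ)^K - 1 := by
    have h1 : (p^3 : ℕ) ∣ q^K - 1 := (Nat.modEq_iff_dvd' (by omega)).mp heuler.symm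
    have h2 := Int.natCast_dvd_natCast.mpr h1
    push_cast [Nat.cast_sub (by omega : 1 ≤ q^K)] at h2
    convert h2 using 2
  have hne : ((q:ℤ)^K - 1) ≠ 0 := by
    have : (2:ℤ) ≤ (q:ℤ)^K := by exact_mod_cast hqK
    omega
  have hfin : FiniteMultiplicity ((p:ℤ)) ((q:ℤ)^K - 1) :=
    Int.finiteMultiplicity_iff.mpr ⟨by simpa using hp.ne_one, hne⟩
  refine ⟨K, multiplicity ((p:ℤ)) ((q:ℤ)^K - 1), hK0, ?_, pow_multiplicity_dvd _ _,
    hfin.not_pow_dvd_of_multiplicity_lt (lt_add_one _)⟩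
  exact hfin.le_multiplicity_of_pow_dvd hdvd3

lemma nat_lt_div_succ_mul (a b : ℕ) (hb : 0 < b) : a < (a/b+1)*b := by
  have h1 := Nat.div_add_mod a b
  have h2 := Nat.mod_lt a hb
  have h3 : (a/b+1)*b = b*(a/b) + b := by ring
  omega

lemma card_filter_middle (k N : ℕ) (hk : 2 ≤ k) (hNk : 2*k ≤ N) :
    N < 2 * ((Finset.range N).filter
      (fun s => (k-1)*N ≤ 4*k*s ∧ 4*k*s ≤ (3*k+1)*N)).card := by
  obtain ⟨k', rfl⟩ : ∃ k', k = k' + 2 := ⟨k-2, by omega⟩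
  have hN0 : 0 < N := by omega
  set lo : ℕ := ((k'+1)*N)/(4*(k'+2)) + 1 with hlo
  set hi : ℕ := ((3*(k'+2)+1)*N)/(4*(k'+2)) with hhi
  have h4k : 0 < 4*(k'+2) := by omega
  have f1 : (k'+1)*N < lo * (4*(k'+2)) := by
    have := nat_lt_div_succ_mul ((k'+1)*N) (4*(k'+2)) h4k
    simpa [hlo] using this
  have f2 : lo * (4*(k'+2)) ≤ (k'+1)*N + 4*(k'+2) := by
    have := Nat.div_mul_le_self ((k'+1)*N) (4*(k'+2))
    rw [hlo, add_mul, one_mul]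
    omega
  have f3 : hi * (4*(k'+2)) ≤ (3*(k'+2)+1)*N := Nat.div_mul_le_self _ _
  have f4 : (3*(k'+2)+1)*N < (hi+1) * (4*(k'+2)) := by
    have := nat_lt_div_succ_mul ((3*(k'+2)+1)*N) (4*(k'+2)) h4k
    simpa [hhi] using this
  have hhiN : hi < N := by
    have h5 : (3*(k'+2)+1)*N < N*(4*(k'+2)) := by
      have h6 : (3*(k'+2)+1)*N < (4*(k'+2))*N := by
        have : (3*(k'+2)+1) < 4*(k'+2) := by omega
        exact Nat.mul_lt_mul_of_lt_of_le this (le_refl N) hN0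
      calc (3*(k'+2)+1)*N < (4*(k'+2))*N := h6
      _ = N*(4*(k'+2)) := by ring
    exact lt_of_mul_lt_mul_right (lt_of_le_of_lt f3 h5) (by omega)
  have hsub : (Finset.Icc lo hi) ⊆ (Finset.range N).filter
      (fun s => ((k'+2)-1)*N ≤ 4*(k'+2)*s ∧ 4*(k'+2)*s ≤ (3*(k'+2)+1)*N) := by
    intro s hs
    rw [Finset.mem_Icc] at hs
    rw [Finset.mem_filter, Finset.mem_range]
    refine ⟨by omega, ?_, ?_⟩
    · calc ((k'+2)-1)*N = (k'+1)*N := by norm_num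
      _ ≤ lo * (4*(k'+2)) := le_of_lt f1
      _ ≤ s * (4*(k'+2)) := Nat.mul_le_mul_right _ hs.1
      _ = 4*(k'+2)*s := by ring
    · calc 4*(k'+2)*s = s * (4*(k'+2)) := by ring
      _ ≤ hi * (4*(k'+2)) := Nat.mul_le_mul_right _ hs.2
      _ ≤ (3*(k'+2)+1)*N := f3
  have hcard := Finset.card_le_card hsub
  rw [Nat.card_Icc] at hcard
  have f1z : ((k':ℤ)+1)*(N:ℤ) < (lo:ℤ) * (4*((k':ℤ)+2)) := by exact_mod_cast f1
  have f2z : (lo:ℤ) * (4*((k':ℤ)+2)) ≤ ((k':ℤ)+1)*N + 4*((k':ℤ)+2) := by exact_mod_cast f2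
  have f4z : (3*((k':ℤ)+2)+1)*(N:ℤ) < ((hi:ℤ)+1) * (4*((k':ℤ)+2)) := by exact_mod_cast f4
  have hNkz : 2*((k':ℤ)+2) ≤ (N:ℤ) := by exact_mod_cast hNk
  have hkN0 : (0:ℤ) ≤ (k':ℤ)*(N:ℤ) := by positivity
  have hlolehi : lo ≤ hi + 1 := by
    by_contra hcon
    push_neg at hcon
    have hz : ((hi:ℤ)+2) ≤ (lo:ℤ) := by exact_mod_cast hcon
    have : ((hi:ℤ)+2) * (4*((k':ℤ)+2)) ≤ (lo:ℤ) * (4*((k':ℤ)+2)) := by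
      apply mul_le_mul_of_nonneg_right hz; linarith
    linarith
  have hfin : (N:ℤ) < 2*((hi:ℤ) + 1 - lo) := by
    have hmul : (N:ℤ) * (4*((k':ℤ)+2)) < (2*((hi:ℤ)+1-(lo:ℤ))) * (4*((k':ℤ)+2)) := by
      nlinarith
    have h4kz : (0:ℤ) < 4*((k':ℤ)+2) := by linarith
    exact lt_of_mul_lt_mul_right hmul (le_of_lt h4kz)
  have : N < 2*(hi + 1 - lo) := by
    have h9 : ((N:ℤ)) < 2*(((hi + 1 - lo : ℕ)):ℤ) := by
      rw [Nat.cast_sub hlolehi]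
      push_cast
      push_cast at hfin
      linarith
    exact_mod_cast h9
  omega

end helpers

set_option maxHeartbeats 1000000 in
theorem stmt_9 (p q r : ℕ) (hp : p.Prime) (hq : q.Prime) (hr : r.Prime)
    (hpq : p ≠ q) (hpr : p ≠ r) (hqr : q ≠ r)
    (ε : ℝ) (hε0 : 0 < ε) (hε : ε < 1 / 4) :
    ∃ a₀ : ℕ, ∀ a : ℕ, a₀ ≤ a → ∃ i j : ℕ,
      (q : ℤ) ^ i * (r : ℤ) ^ j ≡ 1 [ZMOD ((p : ℤ) ^ a)] ∧
      (1 / 4 - ε) * (p : ℝ) ^ a <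
        ((min (min ((q : ℤ) ^ i % (p : ℤ) ^ a) ((p : ℤ) ^ a - (q : ℤ) ^ i % (p : ℤ) ^ a))
              (min ((r : ℤ) ^ j % (p : ℤ) ^ a) ((p : ℤ) ^ a - (r : ℤ) ^ j % (p : ℤ) ^ a)) : ℤ)
          : ℝ) := by
  obtain ⟨Kq, tq, hKq0, htq3, hq1, hq2'⟩ := setup_lemma p q hp hq hpq
  obtain ⟨Kr, tr, hKr0, htr3, hr1, hr2'⟩ := setup_lemma p r hp hr hpr
  obtain ⟨k, hk2, hkε⟩ : ∃ k : ℕ, 2 ≤ k ∧ 1/(k:ℝ) < ε := by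
    obtain ⟨k₀, hk₀⟩ := exists_nat_gt (1/ε)
    refine ⟨k₀ + 2, by omega, ?_⟩
    rw [div_lt_iff₀ (by positivity)]
    rw [div_lt_iff₀ hε0] at hk₀
    push_cast
    nlinarith
  have hk0R : (0:ℝ) < (k:ℝ) := by exact_mod_cast (by omega : 0 < k)
  set c : ℕ := max tq tr with hcdef
  have htqc : tq ≤ c := le_max_left _ _
  have htrc : tr ≤ c := le_max_right _ _
  have hc3 : 3 ≤ c := le_trans htq3 htqc
  refine ⟨c + 2*k, fun a ha => ?_⟩
  have hp2 : 2 ≤ p := hp.two_le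
  have hpz : (2:ℤ) ≤ (p:ℤ) := by exact_mod_cast hp2
  have hca : c ≤ a := by omega
  set N : ℕ := p^(a-c) with hNdef
  have hN0 : 0 < N := pow_pos (by omega) _
  have hNk : 2*k ≤ N := by
    calc 2*k ≤ 2^(2*k) := le_of_lt (Nat.lt_two_pow_self)
    _ ≤ 2^(a-c) := Nat.pow_le_pow_right (by norm_num) (by omega)
    _ ≤ p^(a-c) := Nat.pow_le_pow_left hp2 _
  have hP0 : (0:ℤ) < (p:ℤ)^a := by positivity
  have hPc : ((p:ℤ))^a = (p:ℤ)^c * (N:ℤ) := by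
    rw [hNdef]; push_cast; rw [← pow_add]; congr 1; omega
  have hpc2 : (2:ℤ) ≤ (p:ℤ)^c := by
    calc (2:ℤ) = 2^1 := by norm_num
    _ ≤ 2^c := pow_le_pow_right₀ one_le_two (by omega)
    _ ≤ (p:ℤ)^c := pow_le_pow_left₀ (by norm_num) hpz c
  have hpc8 : (8:ℤ) ≤ (p:ℤ)^c := by
    calc (8:ℤ) = 2^3 := by norm_num
    _ ≤ 2^c := pow_le_pow_right₀ one_le_two hc3
    _ ≤ (p:ℤ)^c := pow_le_pow_left₀ (by norm_num) hpz c
  have hNz2k : (2:ℤ)*(k:ℤ) ≤ (N:ℤ) := by exact_mod_cast hNk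
  have hP16k : 16*(k:ℤ) ≤ (p:ℤ)^a := by
    rw [hPc]
    calc (16:ℤ)*(k:ℤ) = 8*(2*(k:ℤ)) := by ring
    _ ≤ (p:ℤ)^c * (N:ℤ) := mul_le_mul hpc8 hNz2k (by positivity) (by linarith)
  have hppr : Prime (p:ℤ) := Nat.prime_iff_prime_int.mp hp
  have hcopx : ∀ s : ℕ, IsCoprime ((p:ℤ)^a) (1 + (s:ℤ)*(p:ℤ)^c) := by
    intro s
    apply IsCoprime.pow_left
    rw [hppr.coprime_iff_not_dvd]
    intro hdvd
    have h1 : (p:ℤ) ∣ (s:ℤ)*(p:ℤ)^c := Dvd.dvd.mul_left (dvd_pow_self _ (by omega)) _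
    have h2 : (p:ℤ) ∣ 1 := by
      have h3 := dvd_sub hdvd h1
      simpa using h3
    have := Int.le_of_dvd one_pos h2
    linarith
  have hinv : ∀ s : ℕ, ∃ z : ℤ, 0 ≤ z ∧ z < (p:ℤ)^a ∧
      ((p:ℤ)^a ∣ (1 + (s:ℤ)*(p:ℤ)^c) * z - 1) ∧ ((p:ℤ)^c ∣ z - 1) := by
    intro s
    obtain ⟨u, v, huv⟩ := hcopx s
    refine ⟨v % (p:ℤ)^a, Int.emod_nonneg v hP0.ne', Int.emod_lt_of_pos v hP0, ?_, ?_⟩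
    · have h1 : (1 + (s:ℤ)*(p:ℤ)^c) * (v % (p:ℤ)^a) - 1 =
          -(u*(p:ℤ)^a) - (1 + (s:ℤ)*(p:ℤ)^c)*((p:ℤ)^a * (v / (p:ℤ)^a)) := by
        rw [Int.emod_def]
        linear_combination huv
      rw [h1]
      exact dvd_sub (dvd_neg.mpr (Dvd.dvd.mul_left (dvd_refl _) u))
        (Dvd.dvd.mul_left (dvd_mul_right _ _) _)
    · have h2 : (p:ℤ)^c ∣ (1 + (s:ℤ)*(p:ℤ)^c) * (v % (p:ℤ)^a) - 1 := by
        have h3 : (p:ℤ)^c ∣ (p:ℤ)^a := pow_dvd_pow _ hca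
        exact dvd_trans h3 (by
          have h1 : (1 + (s:ℤ)*(p:ℤ)^c) * (v % (p:ℤ)^a) - 1 =
              -(u*(p:ℤ)^a) - (1 + (s:ℤ)*(p:ℤ)^c)*((p:ℤ)^a * (v / (p:ℤ)^a)) := by
            rw [Int.emod_def]
            linear_combination huv
          rw [h1]
          exact dvd_sub (dvd_neg.mpr (Dvd.dvd.mul_left (dvd_refl _) u))
            (Dvd.dvd.mul_left (dvd_mul_right _ _) _))
      have h4 : v % (p:ℤ)^a - 1 =
          ((1 + (s:ℤ)*(p:ℤ)^c) * (v % (p:ℤ)^a) - 1) - (v % (p:ℤ)^a)*((s:ℤ)*(p:ℤ)^c) := by ring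
      rw [h4]
      exact dvd_sub h2 (Dvd.dvd.mul_left (Dvd.dvd.mul_left (dvd_refl _) _) _)
  choose g hg using hinv
  have hdec : ∀ s : ℕ, ∃ e : ℕ, e < N ∧ g s = 1 + (e:ℤ)*(p:ℤ)^c := by
    intro s
    obtain ⟨h0, hltP, hd, hc'⟩ := hg s
    have h1 : 1 ≤ g s := by
      rcases lt_or_ge (g s) 1 with h | h
      · exfalso
        have h0' : g s = 0 := by omega
        rw [h0'] at hc'
        have h5 : (p:ℤ)^c ∣ 1 := (dvd_neg (α := ℤ)).mp (by simpa using hc')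
        have := Int.le_of_dvd one_pos h5
        linarith
      · exact h
    obtain ⟨e', he'⟩ := hc'
    have hpc0 : (0:ℤ) < (p:ℤ)^c := by linarith
    have he'0 : 0 ≤ e' := by nlinarith
    have he'N : e' < (N:ℤ) := by
      have h6 : (p:ℤ)^c * e' < (p:ℤ)^c * N := by rw [← hPc]; omega
      exact lt_of_mul_lt_mul_left h6 (le_of_lt hpc0)
    refine ⟨e'.toNat, by omega, ?_⟩
    rw [Int.toNat_of_nonneg he'0]
    linarith [he']
  choose σ hσ using hdec
  set A : Finset ℕ := (Finset.range N).filter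
    (fun s => (k-1)*N ≤ 4*k*s ∧ 4*k*s ≤ (3*k+1)*N) with hAdef
  have hcardA : N < 2 * A.card := card_filter_middle k N hk2 hNk
  have hAsub : A ⊆ Finset.range N := Finset.filter_subset _ _
  have hcopz : ∀ s : ℕ, IsCoprime ((p:ℤ)^a) (g s) := by
    intro s
    obtain ⟨_, _, hd, _⟩ := hg s
    obtain ⟨w, hw⟩ := hd
    exact ⟨-w, 1 + (s:ℤ)*(p:ℤ)^c, by linear_combination hw⟩
  have hinjσ : Set.InjOn σ A := by
    intro s1 hs1 s2 hs2 heq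
    have hs1N : s1 < N := Finset.mem_range.mp (hAsub (Finset.mem_coe.mp hs1))
    have hs2N : s2 < N := Finset.mem_range.mp (hAsub (Finset.mem_coe.mp hs2))
    have hgg : g s1 = g s2 := by rw [(hσ s1).2, (hσ s2).2, heq]
    obtain ⟨_, _, hd1, _⟩ := hg s1
    obtain ⟨_, _, hd2, _⟩ := hg s2
    rw [hgg] at hd1
    have h7 : (p:ℤ)^a ∣ (g s2) * (((s1:ℤ) - (s2:ℤ))*(p:ℤ)^c) := by
      have h8 : (g s2) * (((s1:ℤ) - (s2:ℤ))*(p:ℤ)^c) =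
          ((1 + (s1:ℤ)*(p:ℤ)^c) * (g s2) - 1) - ((1 + (s2:ℤ)*(p:ℤ)^c) * (g s2) - 1) := by ring
      rw [h8]
      exact dvd_sub hd1 hd2
    have h9 : (p:ℤ)^a ∣ ((s1:ℤ) - (s2:ℤ))*(p:ℤ)^c := (hcopz s2).dvd_of_dvd_mul_left h7
    rw [hPc] at h9
    have h10 : (p:ℤ)^c * (N:ℤ) ∣ (p:ℤ)^c * ((s1:ℤ) - (s2:ℤ)) := by
      have : ((s1:ℤ) - (s2:ℤ))*(p:ℤ)^c = (p:ℤ)^c * ((s1:ℤ) - (s2:ℤ)) := by ring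
      rwa [this] at h9
    have h11 : (N:ℤ) ∣ (s1:ℤ) - (s2:ℤ) :=
      (mul_dvd_mul_iff_left (by positivity : ((p:ℤ)^c) ≠ 0)).mp h10
    have h12 : (s1:ℤ) - (s2:ℤ) = 0 := by
      apply Int.eq_zero_of_abs_lt_dvd h11
      rw [abs_lt]
      constructor <;> [skip; skip] <;>
        (try push_cast) <;> omega
    have := sub_eq_zero.mp h12
    exact_mod_cast this
  set B : Finset ℕ := A.image σ with hBdef
  have hBsub : B ⊆ Finset.range N := by
    intro y hy
    obtain ⟨s, _, rfl⟩ := Finset.mem_image.mp hy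
    exact Finset.mem_range.mpr (hσ s).1
  have hcardB : B.card = A.card := Finset.card_image_of_injOn hinjσ
  have hABne : (A ∩ B).Nonempty := by
    rw [← Finset.card_pos]
    have h1 := Finset.card_union_add_card_inter A B
    have h2 : (A ∪ B).card ≤ N := by
      have := Finset.card_le_card (Finset.union_subset hAsub hBsub)
      simpa using this
    omega
  obtain ⟨s, hsAB⟩ := hABne
  rw [Finset.mem_inter] at hsAB
  obtain ⟨hsA, hsB⟩ := hsAB
  obtain ⟨s', hs'A, hσs'⟩ := Finset.mem_image.mp hsB
  have hsN : s < N := Finset.mem_range.mp (hAsub hsA)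
  have hs'N : s' < N := Finset.mem_range.mp (hAsub hs'A)
  have hgs' : g s' = 1 + (s:ℤ)*(p:ℤ)^c := by rw [← hσs']; exact (hσ s').2
  -- ranges of the two values
  have hxrange : ∀ u : ℕ, u < N →
      0 ≤ 1 + (u:ℤ)*(p:ℤ)^c ∧ 1 + (u:ℤ)*(p:ℤ)^c < (p:ℤ)^a := by
    intro u hu
    have hu1 : (u:ℤ) + 1 ≤ (N:ℤ) := by exact_mod_cast hu
    constructor
    · positivity
    · rw [hPc]
      have h8 : (p:ℤ)^c*((u:ℤ)+1) ≤ (p:ℤ)^c*(N:ℤ) :=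
        mul_le_mul_of_nonneg_left hu1 (by positivity)
      linarith [h8, hpc2]
  -- lower bound claims
  have hbound : ∀ u : ℕ, (k-1)*N ≤ 4*k*u → 4*k*u ≤ (3*k+1)*N →
      (((k:ℤ)-1)*(p:ℤ)^a - 4*(k:ℤ) ≤ 4*(k:ℤ)*(1+(u:ℤ)*(p:ℤ)^c)) ∧
      (((k:ℤ)-1)*(p:ℤ)^a - 4*(k:ℤ) ≤ 4*(k:ℤ)*((p:ℤ)^a - (1+(u:ℤ)*(p:ℤ)^c))) := by
    intro u h1 h2
    have h1z : ((k:ℤ)-1)*(N:ℤ) ≤ 4*(k:ℤ)*(u:ℤ) := by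
      have h1' := (Nat.cast_le (α := ℤ)).mpr h1
      push_cast [Nat.cast_sub (by omega : 1 ≤ k)] at h1'
      linarith
    have h2z : 4*(k:ℤ)*(u:ℤ) ≤ (3*(k:ℤ)+1)*(N:ℤ) := by exact_mod_cast h2
    have hkz : (0:ℤ) ≤ (k:ℤ) := by positivity
    have hpc0 : (0:ℤ) ≤ (p:ℤ)^c := by positivity
    have h3 : ((k:ℤ)-1)*(N:ℤ)*(p:ℤ)^c ≤ 4*(k:ℤ)*(u:ℤ)*(p:ℤ)^c :=
      mul_le_mul_of_nonneg_right h1z hpc0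
    have h5 : 4*(k:ℤ)*(u:ℤ)*(p:ℤ)^c ≤ (3*(k:ℤ)+1)*(N:ℤ)*(p:ℤ)^c :=
      mul_le_mul_of_nonneg_right h2z hpc0
    have h4 : ((k:ℤ)-1)*(p:ℤ)^a = ((k:ℤ)-1)*(N:ℤ)*(p:ℤ)^c := by rw [hPc]; ring
    have h6 : (3*(k:ℤ)+1)*(p:ℤ)^a = (3*(k:ℤ)+1)*(N:ℤ)*(p:ℤ)^c := by rw [hPc]; ring
    constructor
    · linarith [h3, h4, hkz]
    · linarith [h5, h6, hkz]
  -- final real bound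
  have hfinal : ∀ v : ℤ, ((k:ℤ)-1)*(p:ℤ)^a - 4*(k:ℤ) ≤ 4*(k:ℤ)*v →
      (1/4 - ε)*(p:ℝ)^a < (v:ℝ) := by
    intro v hv
    have hvR : ((k:ℝ)-1)*(p:ℝ)^a - 4*(k:ℝ) ≤ 4*(k:ℝ)*(v:ℝ) := by exact_mod_cast hv
    have hPR : (0:ℝ) < (p:ℝ)^a := by positivity
    have hP16R : 16*(k:ℝ) ≤ (p:ℝ)^a := by exact_mod_cast hP16k
    have hεk : 1 < ε*(k:ℝ) := by
      rw [div_lt_iff₀ hk0R] at hkε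
      linarith
    have key : (p:ℝ)^a < ε*(k:ℝ)*(p:ℝ)^a := by nlinarith
    have step : (1/4 - ε)*(p:ℝ)^a * (4*(k:ℝ)) < ((k:ℝ)-1)*(p:ℝ)^a - 4*(k:ℝ) := by
      nlinarith
    have h7 : (1/4 - ε)*(p:ℝ)^a * (4*(k:ℝ)) < (v:ℝ) * (4*(k:ℝ)) := by nlinarith
    exact lt_of_mul_lt_mul_right h7 (by positivity)
  -- cover applications
  have hqnd : ¬ (p:ℤ) ∣ (q:ℤ)^Kq := by
    intro h
    have h1 : (p:ℤ) ∣ (q:ℤ) := hppr.dvd_of_dvd_pow h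
    have h2 : p ∣ q := Int.natCast_dvd_natCast.mp h1
    exact hpq ((Nat.prime_dvd_prime_iff_eq hp hq).mp h2)
  have hrnd : ¬ (p:ℤ) ∣ (r:ℤ)^Kr := by
    intro h
    have h1 : (p:ℤ) ∣ (r:ℤ) := hppr.dvd_of_dvd_pow h
    have h2 : p ∣ r := Int.natCast_dvd_natCast.mp h1
    exact hpr ((Nat.prime_dvd_prime_iff_eq hp hr).mp h2)
  have hpowsplit : ∀ t' : ℕ, t' ≤ c → ∀ u : ℕ, (p:ℤ)^t' ∣ (1 + (u:ℤ)*(p:ℤ)^c) - 1 := by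
    intro t' ht' u
    have h1 : (1 + (u:ℤ)*(p:ℤ)^c) - 1 = (p:ℤ)^t' * ((u:ℤ)*(p:ℤ)^(c-t')) := by
      rw [show ((u:ℤ)*(p:ℤ)^(c-t')) = (u:ℤ)*(p:ℤ)^(c-t') from rfl]
      have : (p:ℤ)^t' * (p:ℤ)^(c-t') = (p:ℤ)^c := by rw [← pow_add]; congr 1; omega
      nlinarith [this]
    rw [h1]
    exact Dvd.intro _ rfl
  obtain ⟨s₁, hs₁⟩ := cover_lemma p hp ((q:ℤ)^Kq) tq a (by omega) (by omega) hqnd hq1 hq2'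
    (1 + (s':ℤ)*(p:ℤ)^c) (hpowsplit tq htqc s')
  obtain ⟨s₂, hs₂⟩ := cover_lemma p hp ((r:ℤ)^Kr) tr a (by omega) (by omega) hrnd hr1 hr2'
    (1 + (s:ℤ)*(p:ℤ)^c) (hpowsplit tr htrc s)
  have hx'range := hxrange s' hs'N
  have hxrange' := hxrange s hsN
  have hqmod : (q:ℤ)^(Kq*s₁) % (p:ℤ)^a = 1 + (s':ℤ)*(p:ℤ)^c := by
    rw [pow_mul, hs₁, Int.emod_eq_of_lt hx'range.1 hx'range.2]
  have hrmod : (r:ℤ)^(Kr*s₂) % (p:ℤ)^a = 1 + (s:ℤ)*(p:ℤ)^c := by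
    rw [pow_mul, hs₂, Int.emod_eq_of_lt hxrange'.1 hxrange'.2]
  refine ⟨Kq*s₁, Kr*s₂, ?_, ?_⟩
  · -- congruence
    have m1 : (q:ℤ)^(Kq*s₁) ≡ (1 + (s':ℤ)*(p:ℤ)^c) [ZMOD (p:ℤ)^a] := by
      show _ % _ = _ % _
      rw [hqmod, Int.emod_eq_of_lt hx'range.1 hx'range.2]
    have m2 : (r:ℤ)^(Kr*s₂) ≡ (1 + (s:ℤ)*(p:ℤ)^c) [ZMOD (p:ℤ)^a] := by
      show _ % _ = _ % _
      rw [hrmod, Int.emod_eq_of_lt hxrange'.1 hxrange'.2]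
    have m3 : (1 + (s':ℤ)*(p:ℤ)^c) * (1 + (s:ℤ)*(p:ℤ)^c) ≡ 1 [ZMOD (p:ℤ)^a] := by
      obtain ⟨_, _, hd, _⟩ := hg s'
      rw [hgs'] at hd
      exact (Int.modEq_iff_dvd.mpr hd).symm
    exact (m1.mul m2).trans m3
  · -- real inequality
    rw [hqmod, hrmod]
    have hmemA : (k-1)*N ≤ 4*k*s ∧ 4*k*s ≤ (3*k+1)*N := (Finset.mem_filter.mp hsA).2
    have hmemA' : (k-1)*N ≤ 4*k*s' ∧ 4*k*s' ≤ (3*k+1)*N := (Finset.mem_filter.mp hs'A).2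
    obtain ⟨b1, b2⟩ := hbound s' hmemA'.1 hmemA'.2
    obtain ⟨b3, b4⟩ := hbound s hmemA.1 hmemA.2
    have c1 := hfinal _ b1
    have c2 := hfinal _ b2
    have c3 := hfinal _ b3
    have c4 := hfinal _ b4
    push_cast [Int.cast_min]
    push_cast at c1 c2 c3 c4
    refine lt_min (lt_min c1 c2) (lt_min c3 c4)
end

section
/- Let p, q, r > 2 be pairwise coprime integers. Then u = ⟨x_q·x_r⟩_p and v = ⟨y_p·y_r⟩_q, where u = x_1 and v = y_1. -/
/-!
Reducing n = x_n·qr + y_n·pr + z_n·pq + δ_n·pqr modulo p gives n ≡ x_n·qr, so x_n is n times the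
inverse of c = qr modulo p. Hence x_q·x_r ≡ qr·c⁻² = c⁻¹ ≡ x_1, and x_1 is already reduced since
0 ≤ x_1 < p. The same argument modulo q gives the claim for y.
-/

theorem Int.ModEq.cancel_left_of_isCoprime {m a b c : ℤ} (hc : IsCoprime c m)
    (h : c * a ≡ c * b [ZMOD m]) : a ≡ b [ZMOD m] := by
  refine Int.modEq_iff_dvd.2 (hc.symm.dvd_of_dvd_mul_left ?_)
  rw [mul_sub]
  exact Int.modEq_iff_dvd.1 h

theorem Int.coeff_one_modEq_coeff_mul_coeff {m s t : ℤ} (w : ℤ → ℤ) (hcop : IsCoprime (s * t) m)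
    (hw : ∀ n, n ≡ w n * (s * t) [ZMOD m]) : w 1 ≡ w s * w t [ZMOD m] := by
  refine Int.ModEq.cancel_left_of_isCoprime (hcop.mul_left hcop) ?_
  calc s * t * (s * t) * w 1 = s * t * (w 1 * (s * t)) := by ring
    _ ≡ s * t * 1 [ZMOD m] := (hw 1).symm.mul_left _
    _ = s * t := mul_one _
    _ ≡ w s * (s * t) * (w t * (s * t)) [ZMOD m] := (hw s).mul (hw t)
    _ = s * t * (s * t) * (w s * w t) := by ring

theorem stmt_11_general (p q r : ℕ)
    (cpq : Nat.Coprime p q) (cpr : Nat.Coprime p r) (cqr : Nat.Coprime q r)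
    (x y z δ : ℤ → ℤ)
    (hrep : ∀ n : ℤ,
      n = x n * ((q : ℤ) * r) + y n * ((p : ℤ) * r) + z n * ((p : ℤ) * q) +
        δ n * ((p : ℤ) * q * r) ∧
      0 ≤ x n ∧ x n < (p : ℤ) ∧ 0 ≤ y n ∧ y n < (q : ℤ) ∧ 0 ≤ z n ∧ z n < (r : ℤ))
    (u v : ℤ) (hu : u = x 1) (hv : v = y 1) :
    u = (x q * x r) % (p : ℤ) ∧ v = (y p * y r) % (q : ℤ) := by
  have hx (n : ℤ) : n ≡ x n * (q * r) [ZMOD p] :=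
    calc n = x n * (q * r) + p * (y n * r + z n * q + δ n * (q * r)) := by
          linear_combination (hrep n).1
      _ ≡ x n * (q * r) [ZMOD p] := Int.modEq_add_fac_self
  have hy (n : ℤ) : n ≡ y n * (p * r) [ZMOD q] :=
    calc n = y n * (p * r) + q * (x n * r + z n * p + δ n * (p * r)) := by
          linear_combination (hrep n).1
      _ ≡ y n * (p * r) [ZMOD q] := Int.modEq_add_fac_self
  have hqr : IsCoprime ((q : ℤ) * r) p :=
    (Nat.isCoprime_iff_coprime.2 cpq.symm).mul_left (Nat.isCoprime_iff_coprime.2 cpr.symm)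
  have hpr : IsCoprime ((p : ℤ) * r) q :=
    (Nat.isCoprime_iff_coprime.2 cpq).mul_left (Nat.isCoprime_iff_coprime.2 cqr.symm)
  obtain ⟨-, hx0, hxp, hy0, hyq, -⟩ := hrep 1
  constructor
  · rw [hu, ← Int.emod_eq_of_lt hx0 hxp]
    exact Int.coeff_one_modEq_coeff_mul_coeff x hqr hx
  · rw [hv, ← Int.emod_eq_of_lt hy0 hyq]
    exact Int.coeff_one_modEq_coeff_mul_coeff y hpr hy

theorem stmt_11 (p q r : ℕ) (hp : 2 < p) (hq : 2 < q) (hr : 2 < r)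
    (cpq : Nat.Coprime p q) (cpr : Nat.Coprime p r) (cqr : Nat.Coprime q r)
    (x y z δ : ℤ → ℤ)
    (hrep : ∀ n : ℤ,
      n = x n * ((q : ℤ) * r) + y n * ((p : ℤ) * r) + z n * ((p : ℤ) * q) +
        δ n * ((p : ℤ) * q * r) ∧
      0 ≤ x n ∧ x n < (p : ℤ) ∧ 0 ≤ y n ∧ y n < (q : ℤ) ∧ 0 ≤ z n ∧ z n < (r : ℤ))
    (u v : ℤ) (hu : u = x 1) (hv : v = y 1) :
    u = (x q * x r) % (p : ℤ) ∧ v = (y p * y r) % (q : ℤ) :=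
  stmt_11_general p q r cpq cpr cqr x y z δ hrep u v hu hv
end

section
/- Let p, q, r > 2 be pairwise coprime integers with p the smallest; let u = x_1, v = y_1, μ = min(x_q, x_r, p − x_q, p − x_r) and C = ⌊μ/u⌋, and assume u ≤ μ, q > p² and v > q − q/p². Put a = (C−1)·u and ℓ = a·q·r. Then χ(ℓ − i) = 1 for all integers 0 ≤ i ≤ C−1, and χ(ℓ + i) = 0 for all integers 0 < i < p. -/
set_option maxHeartbeats 4000000 in
theorem stmt_14 (p q r : ℕ) (hp : 2 < p) (hq : 2 < q) (hr : 2 < r)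
    (cpq : Nat.Coprime p q) (cpr : Nat.Coprime p r) (cqr : Nat.Coprime q r)
    (hpq : p < q) (hpr : p < r)
    (x y z δ : ℤ → ℤ)
    (hrep : ∀ n : ℤ,
      n = x n * ((q : ℤ) * r) + y n * ((p : ℤ) * r) + z n * ((p : ℤ) * q) +
        δ n * ((p : ℤ) * q * r) ∧
      0 ≤ x n ∧ x n < (p : ℤ) ∧ 0 ≤ y n ∧ y n < (q : ℤ) ∧ 0 ≤ z n ∧ z n < (r : ℤ))
    (χ : ℤ → ℤ) (hχ : ∀ n : ℤ, χ n = if δ n = 0 then 1 else 0)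
    (u v μ C : ℤ) (hu : u = x 1) (hv : v = y 1)
    (hμ : μ = min (min (x q) (x r)) (min ((p : ℤ) - x q) ((p : ℤ) - x r)))
    (hC : C = μ / u)
    (huμ : u ≤ μ) (hqp2 : (p : ℤ) ^ 2 < (q : ℤ))
    (hvbig : (q : ℝ) - (q : ℝ) / (p : ℝ) ^ 2 < (v : ℝ))
    (a ℓ : ℤ) (ha : a = (C - 1) * u) (hℓ : ℓ = a * q * r) :
    (∀ i : ℤ, 0 ≤ i → i ≤ C - 1 → χ (ℓ - i) = 1) ∧
    (∀ i : ℤ, 0 < i → i < (p : ℤ) → χ (ℓ + i) = 0) := by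
  have hP : (3:ℤ) ≤ (p:ℤ) := by exact_mod_cast hp
  have hQ : (3:ℤ) ≤ (q:ℤ) := by exact_mod_cast hq
  have hR : (3:ℤ) ≤ (r:ℤ) := by exact_mod_cast hr
  have hP0 : (0:ℤ) < (p:ℤ) := by linarith
  have hQ0 : (0:ℤ) < (q:ℤ) := by linarith
  have hR0 : (0:ℤ) < (r:ℤ) := by linarith
  have hPP : (p:ℤ) + 2 ≤ (p:ℤ)^2 := by linarith [sq_nonneg ((p:ℤ) - 1)]
  have cP : IsCoprime ((p:ℤ)) ((q:ℤ) * (r:ℤ)) := by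
    rw [Int.isCoprime_iff_gcd_eq_one, ← Nat.cast_mul, Int.gcd_natCast_natCast]
    exact cpq.mul_right cpr
  have cQ : IsCoprime ((q:ℤ)) ((p:ℤ) * (r:ℤ)) := by
    rw [Int.isCoprime_iff_gcd_eq_one, ← Nat.cast_mul, Int.gcd_natCast_natCast]
    exact cpq.symm.mul_right cqr
  have cR : IsCoprime ((r:ℤ)) ((p:ℤ) * (q:ℤ)) := by
    rw [Int.isCoprime_iff_gcd_eq_one, ← Nat.cast_mul, Int.gcd_natCast_natCast]
    exact cpr.symm.mul_right cqr.symm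
  obtain ⟨h1eq, hx1nn, hx1lt, hy1nn, hy1lt, hz1nn, hz1lt⟩ := hrep 1
  rw [← hu] at h1eq hx1nn hx1lt
  rw [← hv] at h1eq hy1nn hy1lt
  -- u ≥ 1
  have hu1 : 1 ≤ u := by
    rcases hx1nn.lt_or_eq with h | h
    · linarith
    · exfalso
      have hdvd : (p:ℤ) ∣ 1 := ⟨v * r + z 1 * q + δ 1 * ((q:ℤ) * r), by
        linear_combination h1eq - ((q:ℤ)*r) * h⟩
      have := Int.le_of_dvd one_pos hdvd
      linarith
  obtain ⟨hqeq, hxqnn, hxqlt, hyqnn, hyqlt, hzqnn, hzqlt⟩ := hrep q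
  have hμxq : μ ≤ x q := hμ ▸ le_trans (min_le_left _ _) (min_le_left _ _)
  have hμxq' : μ ≤ (p:ℤ) - x q := hμ ▸ le_trans (min_le_right _ _) (min_le_left _ _)
  have h2μ : 2 * μ ≤ (p:ℤ) := by linarith
  have hμP : μ ≤ (p:ℤ) - 1 := by linarith
  have hCu : C * u ≤ μ := by
    have h1 := Int.ediv_mul_add_emod μ u
    have h2 := Int.emod_nonneg μ (by linarith : u ≠ 0)
    rw [hC]; linarith
  have hC1 : 1 ≤ C := by
    rw [hC]
    exact (Int.le_ediv_iff_mul_le (by linarith : (0:ℤ) < u)).mpr (by linarith)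
  have hCμ : C ≤ μ := by
    have h1 : C * 1 ≤ C * u := mul_le_mul_of_nonneg_left hu1 (by linarith)
    linarith
  -- s := q - v
  obtain ⟨s, hsdef⟩ : ∃ s : ℤ, s = (q:ℤ) - v := ⟨_, rfl⟩
  have hs1 : 1 ≤ s := by rw [hsdef]; linarith
  have hsP2 : s * (p:ℤ)^2 < q := by
    have hp2 : (0:ℝ) < (p:ℝ)^2 := by positivity
    have h0 : (q:ℝ) - (v:ℝ) < (q:ℝ)/(p:ℝ)^2 := by linarith
    have h1 : ((q:ℝ) - (v:ℝ)) * (p:ℝ)^2 < (q:ℝ) := by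
      calc ((q:ℝ)-(v:ℝ))*(p:ℝ)^2 < ((q:ℝ)/(p:ℝ)^2)*(p:ℝ)^2 :=
            mul_lt_mul_of_pos_right h0 hp2
        _ = (q:ℝ) := div_mul_cancel₀ _ (ne_of_gt hp2)
    have h2 : ((s * (p:ℤ)^2 : ℤ) : ℝ) < ((q:ℤ):ℝ) := by
      rw [hsdef]; push_cast; push_cast at h1; linarith
    exact_mod_cast h2
  -- rewrite v = q - s in h1eq
  have hvs : v = (q:ℤ) - s := by rw [hsdef]; ring
  rw [hvs] at h1eq
  -- basic product facts
  have hsPR9 : (9:ℤ) ≤ s * ((p:ℤ)*r) := by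
    have e1 : (3:ℤ)*3 ≤ (p:ℤ)*r := mul_le_mul hP hR (by norm_num) (by linarith)
    have e2 : 1*((p:ℤ)*r) ≤ s*((p:ℤ)*r) :=
      mul_le_mul_of_nonneg_right hs1 (by positivity)
    linarith
  -- u*qr dominates s*pr
  have hEneg : s * ((p:ℤ)*r) + 2 ≤ u * ((q:ℤ)*r) := by
    have h1 : s * (p:ℤ)^2 * r < (q:ℤ) * r := mul_lt_mul_of_pos_right hsP2 hR0
    have e2 : s*((p:ℤ)*r)*3 ≤ s*((p:ℤ)*r)*(p:ℤ) :=
      mul_le_mul_of_nonneg_left hP (by positivity : (0:ℤ) ≤ s*((p:ℤ)*r))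
    have e4 : 1*((q:ℤ)*r) ≤ u*((q:ℤ)*r) :=
      mul_le_mul_of_nonneg_right hu1 (by positivity)
    have e5 : s*((p:ℤ)*r)*(p:ℤ) = s*(p:ℤ)^2*r := by ring
    linarith
  -- δ 1 = -2
  have hk0 : δ 1 + 2 = 0 := by
    have huP : u ≤ (p:ℤ) - 1 := by linarith
    have m1 : u * ((q:ℤ)*r) ≤ ((p:ℤ)-1) * ((q:ℤ)*r) :=
      mul_le_mul_of_nonneg_right huP (by positivity)
    have m2 : ((q:ℤ)-s) * ((p:ℤ)*r) ≤ (q:ℤ) * ((p:ℤ)*r) :=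
      mul_le_mul_of_nonneg_right (by linarith) (by positivity)
    have m3 : z 1 * ((p:ℤ)*q) ≤ (r:ℤ) * ((p:ℤ)*q) :=
      mul_le_mul_of_nonneg_right (le_of_lt hz1lt) (by positivity)
    have m4 : (0:ℤ) ≤ z 1 * ((p:ℤ)*q) := mul_nonneg hz1nn (by positivity)
    have m5 : (0:ℤ) ≤ ((q:ℤ)-s) * ((p:ℤ)*r) :=
      mul_nonneg (by linarith) (by positivity)
    rcases lt_trichotomy (δ 1 + 2) 0 with h | h | h
    · exfalso
      have m6 : δ 1 * ((p:ℤ)*q*r) ≤ (-3) * ((p:ℤ)*q*r) :=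
        mul_le_mul_of_nonneg_right (by linarith) (by positivity)
      linarith [h1eq, mul_pos hQ0 hR0]
    · exact h
    · exfalso
      have m6 : (-1) * ((p:ℤ)*q*r) ≤ δ 1 * ((p:ℤ)*q*r) :=
        mul_le_mul_of_nonneg_right (by linarith) (by positivity)
      linarith [h1eq]
  -- d
  obtain ⟨d, hd1, hdeq⟩ :
      ∃ d : ℤ, 1 ≤ d ∧ d * ((p:ℤ) * q) = u * ((q:ℤ) * r) - s * ((p:ℤ) * r) - 1 := by
    refine ⟨(r:ℤ) - z 1, by linarith, ?_⟩
    linear_combination h1eq + ((p:ℤ)*q*r) * hk0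
  -- uniqueness: exact representation forces δ = 0
  have uniqδ : ∀ n X Y Z : ℤ, 0 ≤ X → X < (p:ℤ) → 0 ≤ Y → Y < (q:ℤ) → 0 ≤ Z → Z < (r:ℤ) →
      n = X * ((q:ℤ)*r) + Y * ((p:ℤ)*r) + Z * ((p:ℤ)*q) → δ n = 0 := by
    intro n X Y Z hX0 hXp hY0 hYq hZ0 hZr hn
    obtain ⟨hne, hxnn, hxlt, hynn, hylt, hznn, hzlt⟩ := hrep n
    have hxX : x n = X := by
      have hdvd : (p:ℤ) ∣ (x n - X) * ((q:ℤ)*r) :=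
        ⟨(Y - y n)*r + (Z - z n)*q - δ n*((q:ℤ)*r), by linear_combination hn - hne⟩
      have h2 := cP.dvd_of_dvd_mul_right hdvd
      have h3 := Int.eq_zero_of_abs_lt_dvd h2 (abs_lt.mpr ⟨by linarith, by linarith⟩)
      linarith
    have hyY : y n = Y := by
      have hdvd : (q:ℤ) ∣ (y n - Y) * ((p:ℤ)*r) :=
        ⟨(X - x n)*r + (Z - z n)*p - δ n*((p:ℤ)*r), by linear_combination hn - hne⟩
      have h2 := cQ.dvd_of_dvd_mul_right hdvd
      have h3 := Int.eq_zero_of_abs_lt_dvd h2 (abs_lt.mpr ⟨by linarith, by linarith⟩)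
      linarith
    have hzZ : z n = Z := by
      have hdvd : (r:ℤ) ∣ (z n - Z) * ((p:ℤ)*q) :=
        ⟨(X - x n)*q + (Y - y n)*p - δ n*((p:ℤ)*q), by linear_combination hn - hne⟩
      have h2 := cR.dvd_of_dvd_mul_right hdvd
      have h3 := Int.eq_zero_of_abs_lt_dvd h2 (abs_lt.mpr ⟨by linarith, by linarith⟩)
      linarith
    have h4 : δ n * ((p:ℤ)*q*r) = 0 := by
      linear_combination hn - hne - ((q:ℤ)*r)*hxX - ((p:ℤ)*r)*hyY - ((p:ℤ)*q)*hzZ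
    have h5 : ((p:ℤ)*q*r) ≠ 0 := by positivity
    exact (mul_eq_zero.mp h4).resolve_right h5
  -- determination of y n mod q
  have uniqy : ∀ n Y : ℤ, 0 ≤ Y → Y < (q:ℤ) → ((q:ℤ) ∣ n - Y * ((p:ℤ)*r)) → y n = Y := by
    intro n Y hY0 hYq hdvd
    obtain ⟨hne, hxnn, hxlt, hynn, hylt, hznn, hzlt⟩ := hrep n
    have h2 : (q:ℤ) ∣ n - y n * ((p:ℤ)*r) :=
      ⟨x n * r + z n * p + δ n * ((p:ℤ)*r), by linear_combination hne⟩
    obtain ⟨c1, hc1⟩ := hdvd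
    obtain ⟨c2, hc2⟩ := h2
    have h3 : (q:ℤ) ∣ (y n - Y) * ((p:ℤ)*r) :=
      ⟨c1 - c2, by linear_combination hc1 - hc2⟩
    have h4 := cQ.dvd_of_dvd_mul_right h3
    have h5 := Int.eq_zero_of_abs_lt_dvd h4 (abs_lt.mpr ⟨by linarith, by linarith⟩)
    linarith
  constructor
  · -- part 1
    intro i hi0 hi1
    have hu0 : (0:ℤ) ≤ u := by linarith
    have hX0 : 0 ≤ (C-1-i)*u := mul_nonneg (by linarith) hu0
    have hXp : (C-1-i)*u < (p:ℤ) := by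
      have h1 : 0 ≤ i*u := mul_nonneg hi0 hu0
      linarith [hCu, hu1, hμP, h1]
    have hY0 : 0 ≤ i*s := mul_nonneg hi0 (by linarith)
    have hYq : i*s < (q:ℤ) := by
      have h1 : i*s ≤ ((p:ℤ)-2)*s :=
        mul_le_mul_of_nonneg_right (by linarith) (by linarith)
      have h2 : (p:ℤ)*s ≤ (p:ℤ)^2*s :=
        mul_le_mul_of_nonneg_right (by linarith [hPP]) (by linarith)
      linarith [hsP2, hs1]
    have hZ0 : 0 ≤ i*d := mul_nonneg hi0 (by linarith)
    have hZr : i*d < (r:ℤ) := by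
      have hdPuR : d*(p:ℤ) < u*(r:ℤ) := by
        have h1 : d*((p:ℤ)*q) < u*((q:ℤ)*r) := by linarith [hdeq, hsPR9]
        have h2 : d*(p:ℤ)*(q:ℤ) < u*(r:ℤ)*(q:ℤ) := by linarith [h1]
        exact lt_of_mul_lt_mul_right h2 (le_of_lt hQ0)
      have h1 : i*(d*(p:ℤ)) ≤ (C-1)*(u*(r:ℤ)) :=
        mul_le_mul hi1 (le_of_lt hdPuR)
          (mul_nonneg (by linarith) (le_of_lt hP0)) (by linarith)
      have h2 : (C-1)*u ≤ μ - 1 := by linarith [hCu, hu1]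
      have h3 : ((C-1)*u)*(r:ℤ) ≤ (μ-1)*(r:ℤ) :=
        mul_le_mul_of_nonneg_right (by linarith [hCu, hu1]) (by linarith)
      have h4 : (μ-1)*(r:ℤ) ≤ ((p:ℤ)-2)*(r:ℤ) :=
        mul_le_mul_of_nonneg_right (by linarith) (by linarith)
      have h5 : i*d*(p:ℤ) < (r:ℤ)*(p:ℤ) := by linarith
      exact lt_of_mul_lt_mul_right h5 (le_of_lt hP0)
    have hδ0 : δ (ℓ - i) = 0 := by
      apply uniqδ (ℓ - i) ((C-1-i)*u) (i*s) (i*d) hX0 hXp hY0 hYq hZ0 hZr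
      rw [hℓ, ha]
      linear_combination (-i) * hdeq
    rw [hχ, if_pos hδ0]
  · -- part 2
    intro i hi0 hiP
    have hi1 : 1 ≤ i := hi0
    have his1 : 1 ≤ i*s := by
      have := mul_le_mul hi1 hs1 (by norm_num) (by linarith)
      linarith
    have hisPQ : i*s*(p:ℤ) < (q:ℤ) := by
      have h1 : i*(s*(p:ℤ)) ≤ ((p:ℤ)-1)*(s*(p:ℤ)) :=
        mul_le_mul_of_nonneg_right (by linarith)
          (mul_nonneg (by linarith) (le_of_lt hP0))
      have h2 : (0:ℤ) < s*(p:ℤ) := mul_pos (by linarith) hP0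
      linarith [hsP2, h1, h2]
    have hisQ : i*s < (q:ℤ) := by
      have h1 : (i*s)*3 ≤ (i*s)*(p:ℤ) :=
        mul_le_mul_of_nonneg_left hP (by linarith)
      linarith [hisPQ]
    have hyn : y (ℓ + i) = (q:ℤ) - i*s := by
      apply uniqy _ _ (by linarith) (by linarith)
      refine ⟨(C-1)*u*r + i*u*r - i*d*p - (p:ℤ)*r, ?_⟩
      rw [hℓ, ha]
      linear_combination i * hdeq
    have hδne : δ (ℓ + i) ≠ 0 := by
      intro h0
      obtain ⟨hne, hxnn, hxlt, hynn, hylt, hznn, hzlt⟩ := hrep (ℓ + i)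
      rw [h0, hyn] at hne
      have hb1 : 0 ≤ x (ℓ+i) * ((q:ℤ)*r) := mul_nonneg hxnn (by positivity)
      have hb2 : 0 ≤ z (ℓ+i) * ((p:ℤ)*q) := mul_nonneg hznn (by positivity)
      have hl : ℓ ≤ (μ - 1)*((q:ℤ)*r) := by
        have hCum : (C-1)*u ≤ μ - 1 := by linarith [hCu, hu1]
        have := mul_le_mul_of_nonneg_right hCum
          (le_of_lt (mul_pos hQ0 hR0))
        rw [hℓ, ha]; linarith
      have hA : i*s*((p:ℤ)*r) < (q:ℤ)*(r:ℤ) := by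
        have := mul_lt_mul_of_pos_right hisPQ hR0
        linarith
      have hint1 : 1*((q:ℤ)*r) ≤ ((p:ℤ)-μ)*((q:ℤ)*r) :=
        mul_le_mul_of_nonneg_right (by linarith) (by positivity)
      have hint2 : (q:ℤ)*3 ≤ (q:ℤ)*(r:ℤ) :=
        mul_le_mul_of_nonneg_left hR (by linarith)
      linarith [hne, hb1, hb2, hl, hA, hint1, hint2, hPP, hqp2]
    rw [hχ, if_neg hδne]
end

section
/- Let p, q, r > 2 be pairwise coprime integers with p the smallest; let u = x_1, v = y_1, μ = min(x_q, x_r, p − x_q, p − x_r) and C = ⌊μ/u⌋, and assume u ≤ μ, q > p² and v > q − q/p². Put a = (C−1)·u and ℓ = a·q·r. Let r' be the element of {r, −r} with x_{r'} < x_{−r'} and let q' be the element of {q, −q} with x_{q'} < x_{−q'}. Then χ(ℓ − r' + i) = 0, χ(ℓ + r' + i) = 0 and χ(ℓ − q' + i) = 0 for all integers i with −C < i < p. -/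
/-!
Modulo `p` the coordinate `x` is additive, `x n ≡ n * x 1`, and modulo `q` likewise
`y n ≡ n * y 1`. So for `n = a q r + w + i` the residue of `x n` is that of `a + x w + i u` and
the residue of `y n` that of `y w - i (q - v)`; as `0 ≤ x n < p`, any representative of the
residue below `p` is a lower bound for `x n` (and similarly for `y n`). On the other hand
`δ n = 0` forces `x n q r + y n p r ≤ n`. For `i ≤ 0` the bound on `x n` does the work (helped,
when `w = ±r`, by the one on `y n`), for `i > 0` the bound on `y n` alone; they are valid and
large enough because `a + u ≤ μ ≤ min (x w) (p - x w)` and `(q - v) p² < q`. For `w = ±r` one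
also needs `x w q r + y w p r = w + p q r`, which holds since `z w = 0` and `δ w = -1`.
-/

theorem Int.ModEq.le_of_nonneg_of_lt {n a b : ℤ} (h : a ≡ b [ZMOD n]) (ha : 0 ≤ a)
    (hb : b < n) : b ≤ a := by
  obtain ⟨k, hk⟩ := Int.modEq_iff_dvd.1 h
  rcases le_or_gt k 0 with hk0 | hk0
  · rcases le_or_gt n 0 with hn | hn
    · linarith
    · nlinarith
  · nlinarith

theorem mul_mul_add_lt_sub_one {p q d j : ℤ} (hj0 : 0 ≤ j) (hjp : j < p) (hd : 0 < d)
    (hdq : d * p ^ 2 < q) : j * d * p + j < q - 1 := by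
  have hdp : 0 ≤ d * p := by nlinarith
  nlinarith [mul_le_mul_of_nonneg_right (show j ≤ p - 1 by omega) hdp]

/-- Lemmas are stated for the coordinate `x`; `swap_xy` and `swap_xz` transfer them to `y`
and `z`. -/
def IsTernaryRep (p q r : ℤ) (x y z δ : ℤ → ℤ) : Prop :=
  ∀ n : ℤ, n = x n * (q * r) + y n * (p * r) + z n * (p * q) + δ n * (p * q * r) ∧
    0 ≤ x n ∧ x n < p ∧ 0 ≤ y n ∧ y n < q ∧ 0 ≤ z n ∧ z n < r

namespace IsTernaryRep

variable {p q r : ℤ} {x y z δ : ℤ → ℤ} {n t a w i : ℤ}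

theorem swap_xy (h : IsTernaryRep p q r x y z δ) : IsTernaryRep q p r y x z δ := fun n => by
  obtain ⟨hn, hx0, hxp, hy0, hyq, hz0, hzr⟩ := h n
  exact ⟨by linear_combination hn, hy0, hyq, hx0, hxp, hz0, hzr⟩

theorem swap_xz (h : IsTernaryRep p q r x y z δ) : IsTernaryRep r p q z x y δ := fun n => by
  obtain ⟨hn, hx0, hxp, hy0, hyq, hz0, hzr⟩ := h n
  exact ⟨by linear_combination hn, hz0, hzr, hx0, hxp, hy0, hyq⟩

theorem x_nonneg (h : IsTernaryRep p q r x y z δ) (n : ℤ) : 0 ≤ x n := (h n).2.1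

theorem x_lt (h : IsTernaryRep p q r x y z δ) (n : ℤ) : x n < p := (h n).2.2.1

theorem y_nonneg (h : IsTernaryRep p q r x y z δ) (n : ℤ) : 0 ≤ y n := h.swap_xy.x_nonneg n

theorem y_lt (h : IsTernaryRep p q r x y z δ) (n : ℤ) : y n < q := h.swap_xy.x_lt n

theorem p_pos (h : IsTernaryRep p q r x y z δ) : 0 < p := (h.x_nonneg 0).trans_lt (h.x_lt 0)

theorem q_pos (h : IsTernaryRep p q r x y z δ) : 0 < q := h.swap_xy.p_pos

theorem r_pos (h : IsTernaryRep p q r x y z δ) : 0 < r := h.swap_xz.p_pos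

theorem modEq_x (h : IsTernaryRep p q r x y z δ) (n : ℤ) : n ≡ x n * (q * r) [ZMOD p] :=
  Int.modEq_iff_dvd.2 ⟨-(y n * r + z n * q + δ n * (q * r)), by linear_combination -(h n).1⟩

theorem x_modEq_of_modEq (h : IsTernaryRep p q r x y z δ) (hcp : IsCoprime p (q * r))
    (hn : n ≡ t * (q * r) [ZMOD p]) : x n ≡ t [ZMOD p] := by
  obtain ⟨k, hk⟩ := Int.modEq_iff_dvd.1 ((h.modEq_x n).symm.trans hn)
  exact Int.modEq_iff_dvd.2 (hcp.dvd_of_dvd_mul_right ⟨k, by linear_combination hk⟩)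

theorem le_x_of_modEq (h : IsTernaryRep p q r x y z δ) (hcp : IsCoprime p (q * r))
    (hn : n ≡ t * (q * r) [ZMOD p]) (ht : t < p) : t ≤ x n :=
  (h.x_modEq_of_modEq hcp hn).le_of_nonneg_of_lt (h.x_nonneg n) ht

theorem x_eq_of_modEq (h : IsTernaryRep p q r x y z δ) (hcp : IsCoprime p (q * r))
    (hn : n ≡ t * (q * r) [ZMOD p]) (ht0 : 0 ≤ t) (ht : t < p) : x n = t :=
  le_antisymm ((h.x_modEq_of_modEq hcp hn).symm.le_of_nonneg_of_lt ht0 (h.x_lt n))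
    (h.le_x_of_modEq hcp hn ht)

theorem x_eq_zero_of_dvd (h : IsTernaryRep p q r x y z δ) (hcp : IsCoprime p (q * r))
    (hn : p ∣ n) : x n = 0 :=
  h.x_eq_of_modEq hcp (Int.modEq_iff_dvd.2 (by simpa using hn.neg_right)) le_rfl h.p_pos

theorem x_pos (h : IsTernaryRep p q r x y z δ) (hn : ¬ p ∣ n) : 0 < x n := by
  refine (h.x_nonneg n).lt_of_ne fun hx => hn ?_
  simpa [← hx] using Int.modEq_iff_dvd.1 (h.modEq_x n).symm

theorem x_neg (h : IsTernaryRep p q r x y z δ) (hcp : IsCoprime p (q * r)) (hn : 0 < x n) :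
    x (-n) = p - x n :=
  h.x_eq_of_modEq hcp (Int.modEq_iff_dvd.2 ⟨y n * r + z n * q + δ n * (q * r) + q * r, by
    linear_combination (h n).1⟩) (by linarith [h.x_lt n]) (by linarith)

theorem min_x_eq_of_eq_or_eq_neg (h : IsTernaryRep p q r x y z δ) (hcp : IsCoprime p (q * r))
    (hs : 0 < x s) (hw : w = s ∨ w = -s) : min (x s) (p - x s) = min (x w) (p - x w) := by
  rcases hw with rfl | rfl
  · rfl
  · rw [h.x_neg hcp hs, sub_sub_cancel, min_comm]

theorem delta_ne_zero_of_lt (h : IsTernaryRep p q r x y z δ)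
    (hn : n < x n * (q * r) + y n * (p * r)) : δ n ≠ 0 := by
  intro hδ
  obtain ⟨hrep, -, -, -, -, hz0, -⟩ := h n
  have := mul_nonneg hz0 (mul_pos h.p_pos h.q_pos).le
  rw [hδ] at hrep
  linarith

theorem x_mul_add_y_mul_eq (h : IsTernaryRep p q r x y z δ) (hcr : IsCoprime r (p * q))
    (hrw : r ∣ w) (hxw : 0 < x w) (hw : |w| < q * r) :
    x w * (q * r) + y w * (p * r) = w + p * q * r := by
  have hz : z w = 0 := h.swap_xz.x_eq_zero_of_dvd hcr hrw
  obtain ⟨hrep, -, hxp, hy0, hyq, -, -⟩ := h w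
  rw [hz] at hrep
  have hqr : 0 ≤ q * r := (mul_pos h.q_pos h.r_pos).le
  have hpr : 0 ≤ p * r := (mul_pos h.p_pos h.r_pos).le
  have hpqr : 0 ≤ p * q * r := mul_nonneg (mul_pos h.p_pos h.q_pos).le h.r_pos.le
  obtain ⟨hw₁, hw₂⟩ := abs_lt.1 hw
  have hδ : δ w = -1 := by
    obtain hδ | hδ | hδ : δ w ≤ -2 ∨ δ w = -1 ∨ 0 ≤ δ w := by omega
    · nlinarith [mul_le_mul_of_nonneg_right hδ hpqr,
        mul_le_mul_of_nonneg_right (show x w ≤ p - 1 by omega) hqr,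
        mul_le_mul_of_nonneg_right (show y w ≤ q - 1 by omega) hpr]
    · exact hδ
    · nlinarith [mul_nonneg hδ hpqr, mul_le_mul_of_nonneg_right (show 1 ≤ x w by omega) hqr,
        mul_nonneg hy0 hpr]
  rw [hδ] at hrep
  linear_combination -hrep

theorem shift_modEq_x (h : IsTernaryRep p q r x y z δ) (a w i : ℤ) :
    a * q * r + w + i ≡ (a + x w + i * x 1) * (q * r) [ZMOD p] := by
  obtain ⟨k, hk⟩ := Int.modEq_iff_dvd.1 (h.modEq_x w)
  obtain ⟨l, hl⟩ := Int.modEq_iff_dvd.1 (h.modEq_x 1)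
  exact Int.modEq_iff_dvd.2 ⟨k + i * l, by linear_combination hk + i * hl⟩

theorem shift_modEq_y (h : IsTernaryRep p q r x y z δ) (a w i : ℤ) :
    a * q * r + w + i ≡ (y w - i * (q - y 1)) * (p * r) [ZMOD q] := by
  obtain ⟨k, hk⟩ := Int.modEq_iff_dvd.1 (h.swap_xy.modEq_x w)
  obtain ⟨l, hl⟩ := Int.modEq_iff_dvd.1 (h.swap_xy.modEq_x 1)
  exact Int.modEq_iff_dvd.2 ⟨k + i * l - i * p * r - a * r, by linear_combination hk + i * hl⟩

theorem le_y_shift (h : IsTernaryRep p q r x y z δ) (hcq : IsCoprime q (p * r))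
    (ht : t ≡ y w - i * (q - y 1) [ZMOD q]) (htq : t < q) : t ≤ y (a * q * r + w + i) :=
  h.swap_xy.le_x_of_modEq hcq ((h.shift_modEq_y a w i).trans (ht.mul_right _).symm) htq

theorem delta_shift_ne_zero_of_nonpos (h : IsTernaryRep p q r x y z δ) (hcp : IsCoprime p (q * r))
    (hu : 0 ≤ x 1) (haw : a < x w) (hawp : a + x w < p) (hai : -a ≤ i * x 1) (hi : i ≤ 0)
    (hw : w < q * r) : δ (a * q * r + w + i) ≠ 0 := by
  have hx := h.le_x_of_modEq hcp (h.shift_modEq_x a w i) (by nlinarith)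
  have hqr : 0 ≤ q * r := (mul_pos h.q_pos h.r_pos).le
  apply h.delta_ne_zero_of_lt
  nlinarith [mul_le_mul_of_nonneg_right hx hqr, mul_nonneg (h.y_nonneg (a * q * r + w + i))
    (mul_pos h.p_pos h.r_pos).le,
    mul_le_mul_of_nonneg_right (show 1 ≤ x w + i * x 1 by linarith) hqr]

theorem delta_shift_ne_zero_of_nonpos_of_sum_eq (h : IsTernaryRep p q r x y z δ)
    (hcp : IsCoprime p (q * r)) (hcq : IsCoprime q (p * r)) (hd : (q - y 1) * p ^ 2 < q)
    (hsum : x w * (q * r) + y w * (p * r) = w + p * q * r) (hxw : 0 < x w) (hwr : w ≤ r)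
    (hu : 0 < x 1) (hawp : a + x w < p) (hai : -a ≤ i * x 1) (hi : i ≤ 0) :
    δ (a * q * r + w + i) ≠ 0 := by
  have hp := h.p_pos
  have hr := h.r_pos
  have hpr : 0 < p * r := mul_pos hp hr
  have hqr : 0 ≤ q * r := (mul_pos h.q_pos hr).le
  have hj := mul_mul_add_lt_sub_one (j := -i) (by linarith) (by nlinarith)
    (by linarith [h.y_lt 1]) hd
  have hx := h.le_x_of_modEq hcp (h.shift_modEq_x a w i) (by nlinarith)
  have hyw : -i * (q - y 1) < q - y w := by
    refine lt_of_mul_lt_mul_right ?_ hpr.le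
    nlinarith [mul_le_mul_of_nonneg_right (show 1 ≤ x w by omega) hqr,
      mul_le_mul_of_nonneg_right hj.le hr.le]
  have hy := h.le_y_shift hcq (a := a) (w := w) (i := i) (Int.ModEq.refl _) (by linarith)
  apply h.delta_ne_zero_of_lt
  nlinarith [mul_le_mul_of_nonneg_right hx hqr, mul_le_mul_of_nonneg_right hy hpr.le,
    mul_le_mul_of_nonneg_right hai hqr,
    mul_nonneg (by linarith : 0 ≤ -i) (by linarith [h.y_lt 1] : 0 ≤ q - y 1)]

theorem delta_shift_ne_zero_of_nonneg_of_sum_eq (h : IsTernaryRep p q r x y z δ)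
    (hcq : IsCoprime q (p * r)) (hd : (q - y 1) * p ^ 2 < q)
    (hsum : x w * (q * r) + y w * (p * r) = w + p * q * r) (hawp : a + x w < p) (hi : 0 ≤ i)
    (hip : i < p) : δ (a * q * r + w + i) ≠ 0 := by
  have hr := h.r_pos
  have hpr : 0 ≤ p * r := (mul_pos h.p_pos hr).le
  have hqr : 0 ≤ q * r := (mul_pos h.q_pos hr).le
  have hd1 : 0 ≤ q - y 1 := by linarith [h.y_lt 1]
  have hj := mul_mul_add_lt_sub_one hi hip (by linarith [h.y_lt 1]) hd
  have hy := h.le_y_shift hcq (a := a) (w := w) (i := i) (Int.ModEq.refl _)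
    (by nlinarith [h.y_lt w])
  apply h.delta_ne_zero_of_lt
  nlinarith [mul_le_mul_of_nonneg_right hy hpr, mul_nonneg (h.x_nonneg (a * q * r + w + i)) hqr,
    mul_le_mul_of_nonneg_right (show a + x w ≤ p - 1 by omega) hqr,
    mul_le_mul_of_nonneg_right hj.le hr.le, mul_le_mul_of_nonneg_left (show 1 ≤ r by omega) hi]

theorem delta_shift_ne_zero_of_pos_of_dvd (h : IsTernaryRep p q r x y z δ)
    (hcq : IsCoprime q (p * r)) (hd : (q - y 1) * p ^ 2 < q) (hqw : q ∣ w) (hwq : w ≤ q)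
    (ha : a + 2 ≤ p) (hi : 0 < i) (hip : i < p) : δ (a * q * r + w + i) ≠ 0 := by
  have hq := h.q_pos
  have hr := h.r_pos
  have hpr : 0 ≤ p * r := (mul_pos h.p_pos hr).le
  have hqr : 0 ≤ q * r := (mul_pos hq hr).le
  have hd1 : 1 ≤ q - y 1 := by linarith [h.y_lt 1]
  have hyw : y w = 0 := h.swap_xy.x_eq_zero_of_dvd hcq hqw
  have hj := mul_mul_add_lt_sub_one hi.le hip (by linarith) hd
  have hy := h.le_y_shift hcq (a := a) (w := w) (i := i) (t := q - i * (q - y 1))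
    (Int.modEq_iff_dvd.2 ⟨-1, by rw [hyw]; ring⟩) (by nlinarith)
  apply h.delta_ne_zero_of_lt
  nlinarith [mul_le_mul_of_nonneg_right hy hpr, mul_nonneg (h.x_nonneg (a * q * r + w + i)) hqr,
    mul_le_mul_of_nonneg_right (show a ≤ p - 2 by omega) hqr,
    mul_le_mul_of_nonneg_right hj.le hr.le, mul_le_mul_of_nonneg_left (show 1 ≤ r by omega) hi.le,
    mul_le_mul_of_nonneg_left (show 1 ≤ r by omega) hq.le]

theorem delta_shift_ne_zero_of_eq_r (h : IsTernaryRep p q r x y z δ) (hcp : IsCoprime p (q * r))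
    (hcq : IsCoprime q (p * r)) (hcr : IsCoprime r (p * q)) (hd : (q - y 1) * p ^ 2 < q)
    (hw : w = r ∨ w = -r) (hu : 0 < x 1) (ha : 0 ≤ a) (haμ : a + x 1 ≤ min (x r) (p - x r))
    (hai : -a ≤ i * x 1) (hip : i < p) : δ (a * q * r + w + i) ≠ 0 := by
  have hxr : 0 < x r := by linarith [(le_min_iff.1 haμ).1]
  rw [h.min_x_eq_of_eq_or_eq_neg hcp hxr hw, le_min_iff] at haμ
  obtain ⟨hxw, hxw'⟩ := haμ
  have hr := h.r_pos
  have hq : 1 < q := by nlinarith [h.y_lt 1, h.p_pos]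
  have hwr : |w| = r := by rcases hw with rfl | rfl <;> simp [abs_of_pos hr]
  have hrw : r ∣ w := by rcases hw with rfl | rfl <;> simp
  have hsum := h.x_mul_add_y_mul_eq hcr hrw (by linarith) (by nlinarith)
  rcases le_or_gt i 0 with hi | hi
  · exact h.delta_shift_ne_zero_of_nonpos_of_sum_eq hcp hcq hd hsum (by linarith)
      (hwr ▸ le_abs_self w) hu (by linarith) hai hi
  · exact h.delta_shift_ne_zero_of_nonneg_of_sum_eq hcq hd hsum (by linarith) hi.le hip

theorem delta_shift_ne_zero_of_eq_q (h : IsTernaryRep p q r x y z δ) (hcp : IsCoprime p (q * r))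
    (hcq : IsCoprime q (p * r)) (hd : (q - y 1) * p ^ 2 < q) (hr : 1 < r)
    (hw : w = q ∨ w = -q) (hu : 0 < x 1) (ha : 0 ≤ a) (haμ : a + x 1 ≤ min (x q) (p - x q))
    (hai : -a ≤ i * x 1) (hip : i < p) : δ (a * q * r + w + i) ≠ 0 := by
  have hxq : 0 < x q := by linarith [(le_min_iff.1 haμ).1]
  rw [h.min_x_eq_of_eq_or_eq_neg hcp hxq hw, le_min_iff] at haμ
  obtain ⟨hxw, hxw'⟩ := haμ
  have hq := h.q_pos
  have hwq : w ≤ q := by rcases hw with rfl | rfl <;> linarith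
  rcases le_or_gt i 0 with hi | hi
  · exact h.delta_shift_ne_zero_of_nonpos hcp hu.le (by linarith) (by linarith) hai hi
      (by nlinarith)
  · exact h.delta_shift_ne_zero_of_pos_of_dvd hcq hd (by rcases hw with rfl | rfl <;> simp) hwq
      (by linarith [h.x_lt 1]) hi hip

end IsTernaryRep

theorem stmt_15_general (p q r : ℕ) (hp : 2 < p) (hr : 2 < r)
    (cpq : Nat.Coprime p q) (cpr : Nat.Coprime p r) (cqr : Nat.Coprime q r)
    (x y z δ : ℤ → ℤ)
    (hrep : ∀ n : ℤ,
      n = x n * ((q : ℤ) * r) + y n * ((p : ℤ) * r) + z n * ((p : ℤ) * q) +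
        δ n * ((p : ℤ) * q * r) ∧
      0 ≤ x n ∧ x n < (p : ℤ) ∧ 0 ≤ y n ∧ y n < (q : ℤ) ∧ 0 ≤ z n ∧ z n < (r : ℤ))
    (χ : ℤ → ℤ) (hχ : ∀ n : ℤ, χ n = if δ n = 0 then 1 else 0)
    (u v μ C : ℤ) (hu : u = x 1) (hv : v = y 1)
    (hμ : μ = min (min (x q) (x r)) (min ((p : ℤ) - x q) ((p : ℤ) - x r)))
    (hC : C = μ / u)
    (huμ : u ≤ μ)
    (hvbig : (q : ℝ) - (q : ℝ) / (p : ℝ) ^ 2 < (v : ℝ))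
    (a ℓ : ℤ) (ha : a = (C - 1) * u) (hℓ : ℓ = a * q * r)
    (r' q' : ℤ) (hr' : r' = (r : ℤ) ∨ r' = -(r : ℤ))
    (hq' : q' = (q : ℤ) ∨ q' = -(q : ℤ)) :
    ∀ i : ℤ, -C < i → i < (p : ℤ) →
      χ (ℓ - r' + i) = 0 ∧ χ (ℓ + r' + i) = 0 ∧ χ (ℓ - q' + i) = 0 := by
  intro i hiC hip
  have h : IsTernaryRep p q r x y z δ := hrep
  have hcp : IsCoprime (p : ℤ) (q * r) := by
    exact_mod_cast Nat.isCoprime_iff_coprime.2 (cpq.mul_right cpr)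
  have hcq : IsCoprime (q : ℤ) (p * r) := by
    exact_mod_cast Nat.isCoprime_iff_coprime.2 (cpq.symm.mul_right cqr)
  have hcr : IsCoprime (r : ℤ) (p * q) := by
    exact_mod_cast Nat.isCoprime_iff_coprime.2 (cpr.symm.mul_right cqr.symm)
  have hu0 : 0 < u := hu ▸ h.x_pos fun h1 => by
    have := Int.eq_one_of_dvd_one (by positivity) h1
    omega
  have hd : ((q : ℤ) - v) * p ^ 2 < q := by
    have : ((q : ℝ) - v) * p ^ 2 < q := (lt_div_iff₀ (by positivity)).1 (by linarith)
    exact_mod_cast this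
  have hC1 : 1 ≤ C := hC ▸ (Int.le_ediv_iff_mul_le hu0).2 (by linarith)
  have ha0 : 0 ≤ a := ha ▸ mul_nonneg (by linarith) hu0.le
  have hau : a + u ≤ μ := by rw [ha, hC]; linarith [Int.ediv_mul_le μ hu0.ne']
  have hai : -a ≤ i * u := by rw [ha]; nlinarith
  subst hℓ hu hv
  have hμr : a + x 1 ≤ min (x r) (p - x r) :=
    hau.trans (hμ ▸ min_le_min (min_le_right _ _) (min_le_right _ _))
  have hμq : a + x 1 ≤ min (x q) (p - x q) :=
    hau.trans (hμ ▸ min_le_min (min_le_left _ _) (min_le_left _ _))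
  refine ⟨?_, ?_, ?_⟩ <;> rw [hχ, if_neg]
  · simpa [sub_eq_add_neg] using
      h.delta_shift_ne_zero_of_eq_r hcp hcq hcr hd (w := -r') (by omega) hu0 ha0 hμr hai hip
  · exact h.delta_shift_ne_zero_of_eq_r hcp hcq hcr hd (by omega) hu0 ha0 hμr hai hip
  · simpa [sub_eq_add_neg] using
      h.delta_shift_ne_zero_of_eq_q hcp hcq hd (w := -q') (by omega) (by omega) hu0 ha0 hμq hai hip

theorem stmt_15 (p q r : ℕ) (hp : 2 < p) (hq : 2 < q) (hr : 2 < r)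
    (cpq : Nat.Coprime p q) (cpr : Nat.Coprime p r) (cqr : Nat.Coprime q r)
    (hpq : p < q) (hpr : p < r)
    (x y z δ : ℤ → ℤ)
    (hrep : ∀ n : ℤ,
      n = x n * ((q : ℤ) * r) + y n * ((p : ℤ) * r) + z n * ((p : ℤ) * q) +
        δ n * ((p : ℤ) * q * r) ∧
      0 ≤ x n ∧ x n < (p : ℤ) ∧ 0 ≤ y n ∧ y n < (q : ℤ) ∧ 0 ≤ z n ∧ z n < (r : ℤ))
    (χ : ℤ → ℤ) (hχ : ∀ n : ℤ, χ n = if δ n = 0 then 1 else 0)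
    (u v μ C : ℤ) (hu : u = x 1) (hv : v = y 1)
    (hμ : μ = min (min (x q) (x r)) (min ((p : ℤ) - x q) ((p : ℤ) - x r)))
    (hC : C = μ / u)
    (huμ : u ≤ μ) (hqp2 : (p : ℤ) ^ 2 < (q : ℤ))
    (hvbig : (q : ℝ) - (q : ℝ) / (p : ℝ) ^ 2 < (v : ℝ))
    (a ℓ : ℤ) (ha : a = (C - 1) * u) (hℓ : ℓ = a * q * r)
    (r' q' : ℤ) (hr' : r' = (r : ℤ) ∨ r' = -(r : ℤ)) (hxr' : x r' < x (-r'))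
    (hq' : q' = (q : ℤ) ∨ q' = -(q : ℤ)) (hxq' : x q' < x (-q')) :
    ∀ i : ℤ, -C < i → i < (p : ℤ) →
      χ (ℓ - r' + i) = 0 ∧ χ (ℓ + r' + i) = 0 ∧ χ (ℓ - q' + i) = 0 :=
  stmt_15_general p q r hp hr cpq cpr cqr x y z δ hrep χ hχ u v μ C hu hv hμ hC huμ hvbig a ℓ ha hℓ
    r' q' hr' hq'
end

section
/- For every prime p with p ≡ 3 or 7 (mod 8), there exist primes q and r such that: p < q, q ≡ p (mod 8), gcd(p−1, q−1) = 2, q is a primitive root modulo p², and r is a primitive root modulo p² and modulo q². -/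
/-!
Dirichlet's theorem gives primes in every residue class of units modulo `p² · 8 · s`, where
`s = (p - 1)/2` is odd because `p ≡ 3 mod 4`. Take `q` in the class of a primitive root
modulo `p²`, of `p` modulo `8` and of `2` modulo `s`. Then `q - 1 ≡ 1 mod s`, so
`gcd(p - 1, q - 1) = gcd(2, q - 1) = 2`. A prime `r` in the class of primitive roots modulo both
`p²` and `q²` is found in the same way.
-/

/-- `g` is a primitive root modulo `m`: it generates the multiplicative group of `ZMod m`. -/
def IsPrimRootMod (g m : ℕ) : Prop :=
  IsUnit (g : ZMod m) ∧ ∀ x : (ZMod m)ˣ, ∃ i : ℕ, (g : ZMod m) ^ i = (x : ZMod m)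

namespace IsPrimRootMod

theorem coprime {g m : ℕ} (h : IsPrimRootMod g m) : g.Coprime m :=
  (ZMod.isUnit_iff_coprime g m).mp h.1

theorem of_modEq {g a m : ℕ} (h : IsPrimRootMod g m) (ha : a ≡ g [MOD m]) :
    IsPrimRootMod a m := by
  rw [IsPrimRootMod, (ZMod.natCast_eq_natCast_iff a g m).mpr ha]
  exact h

end IsPrimRootMod

theorem exists_isPrimRootMod_of_isCyclic {m : ℕ} [NeZero m] (h : IsCyclic (ZMod m)ˣ) :
    ∃ g : ℕ, IsPrimRootMod g m := by
  obtain ⟨ζ, hζ⟩ := h.exists_generator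
  refine ⟨(ζ : ZMod m).val, ?_, fun x => ?_⟩
  · rw [ZMod.natCast_zmod_val]
    exact ζ.isUnit
  · obtain ⟨i, hi⟩ := mem_powers_iff_mem_zpowers.mpr (hζ x)
    exact ⟨i, by rw [ZMod.natCast_zmod_val, ← Units.val_pow_eq_pow_val, ← hi]⟩

theorem exists_isPrimRootMod_prime_pow {p : ℕ} (hp : p.Prime) (hp2 : p ≠ 2) (n : ℕ) :
    ∃ g : ℕ, IsPrimRootMod g (p ^ n) :=
  have : NeZero (p ^ n) := ⟨pow_ne_zero n hp.ne_zero⟩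
  exists_isPrimRootMod_of_isCyclic (ZMod.isCyclic_units_of_prime_pow p hp hp2 n)

theorem Nat.exists_prime_gt_modEq_modEq {m n a b : ℕ} (hm : m ≠ 0) (hn : n ≠ 0)
    (hmn : m.Coprime n) (ha : a.Coprime m) (hb : b.Coprime n) (N : ℕ) :
    ∃ q > N, q.Prime ∧ q ≡ a [MOD m] ∧ q ≡ b [MOD n] := by
  obtain ⟨c, hca, hcb⟩ := Nat.chineseRemainder hmn a b
  have hc : c.Coprime (m * n) :=
    Nat.Coprime.mul_right (hca.gcd_eq.trans ha) (hcb.gcd_eq.trans hb)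
  obtain ⟨q, hqN, hq, hqc⟩ := Nat.forall_exists_prime_gt_and_modEq N (mul_ne_zero hm hn) hc
  exact ⟨q, hqN, hq, (hqc.of_mul_right n).trans hca, (hqc.of_mul_left m).trans hcb⟩

theorem exists_prime_gt_isPrimRootMod_sq_modEq {p n b : ℕ} (hp : p.Prime) (hp2 : p ≠ 2)
    (hn : n ≠ 0) (hpn : p.Coprime n) (hb : b.Coprime n) (N : ℕ) :
    ∃ q > N, q.Prime ∧ IsPrimRootMod q (p ^ 2) ∧ q ≡ b [MOD n] := by
  obtain ⟨g, hg⟩ := exists_isPrimRootMod_prime_pow hp hp2 2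
  obtain ⟨q, hqN, hq, hqg, hqb⟩ := Nat.exists_prime_gt_modEq_modEq
    (pow_ne_zero 2 hp.ne_zero) hn (hpn.pow_left 2) hg.coprime hb N
  exact ⟨q, hqN, hq, hg.of_modEq hqg, hqb⟩

theorem Nat.gcd_two_mul_sub_one_eq_two {s q : ℕ} (hq : Odd q) (hqs : q ≡ 2 [MOD s]) :
    Nat.gcd (2 * s) (q - 1) = 2 := by
  have hq1 : q - 1 ≡ 1 [MOD s] :=
    Nat.ModEq.add_right_cancel' 1 (by rwa [Nat.sub_add_cancel hq.pos])
  have hsq : s.Coprime (q - 1) := by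
    rw [Nat.coprime_comm, Nat.Coprime, hq1.gcd_eq, Nat.gcd_one_left]
  rw [hsq.gcd_mul_right_cancel]
  exact Nat.gcd_eq_left (even_iff_two_dvd.mp (Nat.Odd.sub_odd hq odd_one))

theorem stmt_16 (p : ℕ) (hp : p.Prime) (h8 : p % 8 = 3 ∨ p % 8 = 7) :
    ∃ q r : ℕ, q.Prime ∧ r.Prime ∧ p < q ∧ q % 8 = p % 8 ∧
      Nat.gcd (p - 1) (q - 1) = 2 ∧
      IsPrimRootMod q (p ^ 2) ∧ IsPrimRootMod r (p ^ 2) ∧ IsPrimRootMod r (q ^ 2) := by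
  set s := (p - 1) / 2
  have hps : p - 1 = 2 * s := by omega
  have hp2 : p ≠ 2 := by omega
  have hp8 : p.Coprime 8 :=
    Nat.Coprime.pow_right 3 (Nat.coprime_two_right.mpr (hp.odd_of_ne_two hp2))
  have h2s : Nat.Coprime 2 s := Nat.coprime_two_left.mpr (Nat.odd_iff.mpr (by omega))
  have hp8s : p.Coprime (8 * s) := hp8.mul_right (Nat.coprime_of_lt_prime (by omega) (by omega) hp)
  obtain ⟨k, hk8, hks⟩ := Nat.chineseRemainder (h2s.pow_left 3) p 2
  have hk : k.Coprime (8 * s) :=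
    Nat.Coprime.mul_right (hk8.gcd_eq.trans hp8) (hks.gcd_eq.trans h2s)
  obtain ⟨q, hpq, hq, hqP, hqk⟩ :=
    exists_prime_gt_isPrimRootMod_sq_modEq hp hp2 (by omega) hp8s hk p
  have hq8 : q % 8 = p % 8 := (hqk.of_mul_right s).trans hk8
  have hqs : q ≡ 2 [MOD s] := (hqk.of_mul_left 8).trans hks
  obtain ⟨g, hg⟩ := exists_isPrimRootMod_prime_pow hq (by omega) 2
  obtain ⟨r, -, hr, hrP, hrg⟩ := exists_prime_gt_isPrimRootMod_sq_modEq hp hp2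
    (pow_ne_zero 2 hq.ne_zero) (((Nat.coprime_primes hp hq).mpr hpq.ne).pow_right 2) hg.coprime 0
  refine ⟨q, r, hq, hr, hpq, hq8, ?_, hqP, hrP, hg.of_modEq hrg⟩
  rw [hps]
  exact Nat.gcd_two_mul_sub_one_eq_two (Nat.odd_iff.mpr (by omega)) hqs
end
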